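/- arXiv:1408.0948 — 9 statements merged into one kernel-verified Lean document; each statement's English description precedes it below -/
import Mathlib

section
/- For every n ∈ ℕ, the Boolean quadratic polytope conv(BQP_n) is affinely equivalent to an exposed face of conv(BQP_{n+1}); concretely, the set F = conv(BQP_{n+1}) ∩ {x : x_{(n+1)(n+1)} = 0} is an exposed face of conv(BQP_{n+1}), and there is an injective affine map φ from the coordinate space of BQP_n to that of BQP_{n+1} with φ(conv(BQP_n)) = F. -/
/-- Index set `Δ_n = {(i,j) : 1 ≤ i ≤ j ≤ n}` for Boolean quadratic polytopes. -/
def Idx (n : ℕ) : Type := {p : Fin n × Fin n // p.1 ≤ p.2}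

/-- The vertex set of the Boolean quadratic polytope:
0/1 vectors with `x_{ij} = x_{ii} * x_{jj}` for `i < j`. -/
def BQP (n : ℕ) : Set (Idx n → ℝ) :=
  {x | (∀ p, x p = 0 ∨ x p = 1) ∧
       ∀ (i j : Fin n) (h : i < j),
         x ⟨(i, j), le_of_lt h⟩ = x ⟨(i, i), le_refl i⟩ * x ⟨(j, j), le_refl j⟩}

/-!
Zero extension from `Δ_n` to `Δ_{n+1}` maps the vertices of `BQP_n` onto
those of `BQP_{n+1}` with `x_{(n+1)(n+1)} = 0`: for such a vertex
`x_{i(n+1)} = x_{ii} x_{(n+1)(n+1)}` vanishes too. Since every vertex has `x_{(n+1)(n+1)} ≥ 0`,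
this coordinate hyperplane exposes a face of the polytope, and a face of a convex hull is the
convex hull of the generators it contains; zero extension is injective, linear, and commutes
with convex hulls. -/

theorem IsExtreme.eq_convexHull_inter {𝕜 E : Type*} [Semiring 𝕜] [PartialOrder 𝕜]
    [ZeroLEOneClass 𝕜] [AddCommMonoid E] [Module 𝕜 E] {s B : Set E}
    (h : IsExtreme 𝕜 (convexHull 𝕜 s) B) (hB : Convex 𝕜 B) : B = convexHull 𝕜 (s ∩ B) := by
  refine subset_antisymm (fun x hx => ?_) (convexHull_min Set.inter_subset_right hB)
  let T := {x ∈ convexHull 𝕜 s | x ∈ B → x ∈ convexHull 𝕜 (s ∩ B)}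
  have hsT : s ⊆ T := fun y hy =>
    ⟨subset_convexHull 𝕜 s hy, fun hyB => subset_convexHull 𝕜 _ ⟨hy, hyB⟩⟩
  -- an open segment meeting the extreme set `B` has both ends in `B`
  have hT : Convex 𝕜 T := by
    refine convex_iff_openSegment_subset.2 fun y hy z hz w hw =>
      ⟨(convex_convexHull 𝕜 s).openSegment_subset hy.1 hz.1 hw, fun hwB => ?_⟩
    exact (convex_convexHull 𝕜 _).openSegment_subset
      (hy.2 (h.left_mem_of_mem_openSegment hy.1 hz.1 hwB hw))
      (hz.2 (h.right_mem_of_mem_openSegment hy.1 hz.1 hwB hw)) hw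
  exact (convexHull_min hsT hT (h.subset hx)).2 hx

theorem isExposed_inter_of_forall_le {𝕜 E : Type*} [TopologicalSpace 𝕜] [Ring 𝕜]
    [PartialOrder 𝕜] [IsOrderedRing 𝕜] [IsTopologicalAddGroup 𝕜] [AddCommGroup E]
    [TopologicalSpace E] [Module 𝕜 E]
    {A : Set E} {l : StrongDual 𝕜 E} {a : 𝕜} (h : ∀ y ∈ A, a ≤ l y) :
    IsExposed 𝕜 A (A ∩ {x | l x = a}) := by
  rintro ⟨x₀, hx₀A, hx₀⟩
  refine ⟨-l, Set.ext fun x =>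
    ⟨fun ⟨hxA, hx⟩ => ⟨hxA, fun y hy => ?_⟩, fun ⟨hxA, hx⟩ => ⟨hxA, ?_⟩⟩⟩
  · simpa [hx.out] using h y hy
  · simpa [hx₀.out] using le_antisymm (by simpa [hx₀.out] using hx x₀ hx₀A) (h x hxA)

namespace Idx

variable {n : ℕ}

theorem ext {p q : Idx n} (h : p.1 = q.1) : p = q := Subtype.ext h

def castSucc (p : Idx n) : Idx (n + 1) :=
  ⟨(p.1.1.castSucc, p.1.2.castSucc), Fin.castSucc_le_castSucc_iff.2 p.2⟩

theorem castSucc_injective : Function.Injective (castSucc (n := n)) := fun _ _ h =>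
  ext (Prod.ext (Fin.castSucc_injective n congr($h.1.1))
    (Fin.castSucc_injective n congr($h.1.2)))

theorem exists_castSucc_eq {q : Idx (n + 1)} : (∃ p, castSucc p = q) ↔ q.1.2 ≠ Fin.last n := by
  refine ⟨fun ⟨p, hp⟩ => hp ▸ Fin.castSucc_ne_last _, fun hq => ?_⟩
  obtain ⟨j, hj⟩ := Fin.exists_castSucc_eq.2 hq
  obtain ⟨i, hi⟩ := Fin.exists_castSucc_eq.2 (q.2.trans_lt (hj ▸ Fin.castSucc_lt_last j)).ne
  exact ⟨⟨(i, j), Fin.castSucc_le_castSucc_iff.1 (hi ▸ hj ▸ q.2)⟩, ext (Prod.ext hi hj)⟩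

theorem extend_castSucc_of_snd_eq_last {R : Type*} [Zero R] (x : Idx n → R) {q : Idx (n + 1)}
    (hq : q.1.2 = Fin.last n) : Function.extend castSucc x 0 q = 0 :=
  Function.extend_apply' _ _ _ (by rwa [exists_castSucc_eq, not_not])

theorem extend_castSucc_castSucc {R : Type*} [Zero R] (x : Idx n → R) {i j : Fin n}
    (h : i.castSucc ≤ j.castSucc) :
    Function.extend castSucc x 0 ⟨(i.castSucc, j.castSucc), h⟩ =
      x ⟨(i, j), Fin.castSucc_le_castSucc_iff.1 h⟩ :=
  castSucc_injective.extend_apply x 0 ⟨(i, j), _⟩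

end Idx

namespace BQP

variable {n : ℕ}

theorem apply_snd_eq_last {v : Idx (n + 1) → ℝ} (hv : v ∈ BQP (n + 1))
    (hlast : v ⟨(Fin.last n, Fin.last n), le_rfl⟩ = 0) {q : Idx (n + 1)}
    (hq : q.1.2 = Fin.last n) : v q = 0 := by
  obtain ⟨⟨i, j⟩, hij⟩ := q
  obtain rfl : j = Fin.last n := hq
  obtain hlt | rfl := (Fin.le_last i).lt_or_eq
  · rw [hv.2 i _ hlt, hlast, mul_zero]
  · exact hlast

theorem extend_castSucc_mem {x : Idx n → ℝ} (hx : x ∈ BQP n) :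
    Function.extend Idx.castSucc x 0 ∈ BQP (n + 1) := by
  refine ⟨fun q => ?_, fun i j hij => ?_⟩
  · by_cases hq : q.1.2 = Fin.last n
    · exact .inl (Idx.extend_castSucc_of_snd_eq_last x hq)
    · obtain ⟨p, rfl⟩ := Idx.exists_castSucc_eq.2 hq
      rw [Idx.castSucc_injective.extend_apply]
      exact hx.1 p
  · by_cases hj : j = Fin.last n
    · subst hj
      rw [Idx.extend_castSucc_of_snd_eq_last x (q := ⟨(i, Fin.last n), hij.le⟩) rfl,
        Idx.extend_castSucc_of_snd_eq_last x (q := ⟨(Fin.last n, Fin.last n), le_rfl⟩) rfl,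
        mul_zero]
    · obtain ⟨j, rfl⟩ := Fin.exists_castSucc_eq.2 hj
      obtain ⟨i, rfl⟩ := Fin.exists_castSucc_eq.2 (hij.trans (Fin.castSucc_lt_last j)).ne
      simp only [Idx.extend_castSucc_castSucc]
      exact hx.2 i j (Fin.castSucc_lt_castSucc_iff.1 hij)

theorem apply_nonneg {v : Idx n → ℝ} (hv : v ∈ BQP n) (q : Idx n) : 0 ≤ v q :=
  (hv.1 q).elim (·.ge) (fun h => h ▸ zero_le_one)

theorem apply_nonneg_of_mem_convexHull {y : Idx n → ℝ} (hy : y ∈ convexHull ℝ (BQP n))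
    (q : Idx n) : 0 ≤ y q :=
  convexHull_min (fun _ hv => apply_nonneg hv q)
    (convex_halfSpace_ge (LinearMap.proj q).isLinear 0) hy

theorem image_extend_castSucc :
    (fun x => Function.extend Idx.castSucc x 0) '' BQP n =
      BQP (n + 1) ∩ {v | v ⟨(Fin.last n, Fin.last n), le_rfl⟩ = 0} := by
  refine subset_antisymm ?_ fun v ⟨hv, hlast⟩ => ⟨v ∘ Idx.castSucc, ⟨fun p => hv.1 _, ?_⟩, ?_⟩
  · rintro _ ⟨x, hx, rfl⟩
    exact ⟨extend_castSucc_mem hx, Idx.extend_castSucc_of_snd_eq_last x rfl⟩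
  · exact fun i j hij => hv.2 _ _ (Fin.castSucc_lt_castSucc_iff.2 hij)
  · funext q
    dsimp only
    by_cases hq : q.1.2 = Fin.last n
    · rw [Idx.extend_castSucc_of_snd_eq_last _ hq, apply_snd_eq_last hv hlast hq]
    · obtain ⟨p, rfl⟩ := Idx.exists_castSucc_eq.2 hq
      exact Idx.castSucc_injective.extend_apply _ _ p

end BQP

/-- `conv(BQP_n)` is affinely equivalent to the exposed face
`conv(BQP_{n+1}) ∩ {x : x_{(n+1)(n+1)} = 0}` of `conv(BQP_{n+1})`. -/
theorem stmt0 (n : ℕ) :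
    IsExposed ℝ (convexHull ℝ (BQP (n + 1)))
      (convexHull ℝ (BQP (n + 1)) ∩
        {x | x ⟨(Fin.last n, Fin.last n), le_refl _⟩ = 0}) ∧
    ∃ φ : (Idx n → ℝ) →ᵃ[ℝ] (Idx (n + 1) → ℝ),
      Function.Injective φ ∧
      φ '' (convexHull ℝ (BQP n)) =
        convexHull ℝ (BQP (n + 1)) ∩
          {x | x ⟨(Fin.last n, Fin.last n), le_refl _⟩ = 0} := by
  have hface : IsExposed ℝ (convexHull ℝ (BQP (n + 1)))
      (convexHull ℝ (BQP (n + 1)) ∩ {x | x ⟨(Fin.last n, Fin.last n), le_refl _⟩ = 0}) :=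
    isExposed_inter_of_forall_le (a := 0)
      (l := (ContinuousLinearMap.proj _ : StrongDual ℝ (Idx (n + 1) → ℝ)))
      fun _ hy => BQP.apply_nonneg_of_mem_convexHull hy _
  refine ⟨hface, (Function.ExtendByZero.linearMap ℝ Idx.castSucc).toAffineMap,
    Function.extend_injective Idx.castSucc_injective 0, ?_⟩
  rw [AffineMap.image_convexHull,
    hface.isExtreme.eq_convexHull_inter (hface.convex (convex_convexHull ℝ _)), ← Set.inter_assoc,
    Set.inter_eq_left.2 (subset_convexHull ℝ _)]
  exact congrArg _ BQP.image_extend_castSucc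
end

section
/- For every n ≥ 1 there exists a simple graph G on k = n(n+1) vertices such that conv(BQP_n) is affinely equivalent to an exposed face of the stable set polytope conv(SSP(G)): there is an exposed face F of conv(SSP(G)) and an injective affine map φ : ℝ^{Δ_n} → ℝ^k with φ(conv(BQP_n)) = F. -/
/-- The vertex set of the stable set polytope of a simple graph `G` on `Fin k`. -/
def SSP {k : ℕ} (G : SimpleGraph (Fin k)) : Set (Fin k → ℝ) :=
  {y | (∀ i, y i = 0 ∨ y i = 1) ∧ ∀ i j, G.Adj i j → y i + y j ≤ 1}

/-!
Encode `x : Δ_n → ℝ` on two vertices per index `p`: `(p, true)` carries `x_p`, and `(p, false)`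
carries `x_jj - x_ij` if `p = (i, j)` with `i < j`, and `1 - x_jj` if `p = (j, j)`. The edges of
the graph pull back to the McCormick inequalities, so BQP points are sent to stable sets. For
`p = (i, j)`, `i < j`, the vertices `(p, true), (p, false), (diag j, false)` form a triangle, and
`(p, true), (p, false)` an edge for diagonal `p`. The sum of these clique inequalities is
bounded by `|Δ_n|` on stable sets and equals `|Δ_n|` identically on the image of the encoding; a
stable set attaining it makes every clique inequality tight, and tightness together with the
edges at `(diag i, _)` forces it to be the encoding of a BQP point. So the encoding maps `BQP_n`
onto the vertices of the exposed face, and by affinity `conv BQP_n` onto the face.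
-/

open Set

section ConvexFace

variable {𝕜 E F : Type*} [Field 𝕜] [LinearOrder 𝕜] [IsStrictOrderedRing 𝕜]
  [AddCommGroup E] [Module 𝕜 E] [AddCommGroup F] [Module 𝕜 F]

theorem convexHull_inter_hyperplane {s : Set F} {l : F →ₗ[𝕜] 𝕜} {m : 𝕜}
    (hs : ∀ y ∈ s, l y ≤ m) :
    convexHull 𝕜 s ∩ {y | l y = m} = convexHull 𝕜 (s ∩ {y | l y = m}) := by
  refine subset_antisymm ?_ <| subset_inter (convexHull_mono inter_subset_left)
    (convexHull_min inter_subset_right (convex_hyperplane l.isLinear m))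
  set C := convexHull 𝕜 (s ∩ {y | l y = m})
  have hCle : C ⊆ {y | l y ≤ m} :=
    convexHull_min (fun y hy => hy.2.le) (convex_halfSpace_le l.isLinear m)
  -- Adding the open half-space to `C` keeps it convex, and the result contains `s`.
  have hconv : Convex 𝕜 (C ∪ {y | l y < m}) := by
    rw [convex_iff_forall_pos]
    intro x hx y hy a b ha hb hab
    by_cases hxy : x ∈ C ∧ y ∈ C
    · exact Or.inl (convex_convexHull 𝕜 _ hxy.1 hxy.2 ha.le hb.le hab)
    have hx' : l x ≤ m := hx.elim (fun h => hCle h) le_of_lt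
    have hy' : l y ≤ m := hy.elim (fun h => hCle h) le_of_lt
    have hstrict : l x < m ∨ l y < m := by
      rcases hx with hx | hx <;> rcases hy with hy | hy <;> simp_all
    right
    have hm : a * m + b * m = m := by rw [← add_mul, hab, one_mul]
    simp only [mem_ofPred_eq, map_add, map_smul, smul_eq_mul]
    rcases hstrict with h | h
    · nlinarith [mul_lt_mul_of_pos_left h ha, mul_le_mul_of_nonneg_left hy' hb.le]
    · nlinarith [mul_le_mul_of_nonneg_left hx' ha.le, mul_lt_mul_of_pos_left h hb]
  have hsub : convexHull 𝕜 s ⊆ C ∪ {y | l y < m} :=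
    convexHull_min
      (fun y hy => (hs y hy).eq_or_lt.imp (fun h => subset_convexHull 𝕜 _ ⟨hy, h⟩) id) hconv
  rintro y ⟨hy, hly⟩
  exact (hsub hy).resolve_right (by simp [show l y = m from hly])

variable [TopologicalSpace 𝕜] [TopologicalSpace F]

theorem AffineMap.image_convexHull_eq_toExposed (φ : E →ᵃ[𝕜] F) {A : Set E} {S : Set F}
    {l : StrongDual 𝕜 F} {m : 𝕜} (hA : A.Nonempty) (hS : ∀ y ∈ S, l y ≤ m)
    (hφ : φ '' A = S ∩ {y | l y = m}) :
    φ '' convexHull 𝕜 A = l.toExposed (convexHull 𝕜 S) := by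
  have hle : ∀ y ∈ convexHull 𝕜 S, l y ≤ m :=
    convexHull_min hS (convex_halfSpace_le l.isLinear m)
  obtain ⟨x, hx⟩ := hA
  have hmax : φ x ∈ S ∩ {y | l y = m} := hφ ▸ mem_image_of_mem φ hx
  have hexp : l.toExposed (convexHull 𝕜 S) = convexHull 𝕜 S ∩ {y | l y = m} := by
    ext y
    refine ⟨fun ⟨hy, hymax⟩ => ⟨hy, (hle y hy).antisymm ?_⟩, fun ⟨hy, hly⟩ => ⟨hy, fun z hz => ?_⟩⟩
    · exact hmax.2 ▸ hymax _ (subset_convexHull 𝕜 _ hmax.1)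
    · exact (hle z hz).trans_eq hly.symm
  rw [hexp, φ.image_convexHull, hφ]
  exact (convexHull_inter_hyperplane (l := l.toLinearMap) hS).symm

end ConvexFace

theorem ContinuousLinearEquiv.image_toExposed {𝕜 E F : Type*} [TopologicalSpace 𝕜] [Ring 𝕜]
    [PartialOrder 𝕜] [AddCommGroup E] [Module 𝕜 E] [AddCommGroup F] [Module 𝕜 F]
    [TopologicalSpace E] [TopologicalSpace F] (T : E ≃L[𝕜] F) (l : StrongDual 𝕜 E) (A : Set E) :
    T '' l.toExposed A = (l ∘L (T.symm : F →L[𝕜] E)).toExposed (T '' A) := by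
  ext y
  simp [ContinuousLinearMap.toExposed, T.image_eq_preimage_symm, T.surjective.forall]

section StableIndicators

variable {V W : Type*}

def SimpleGraph.stableIndicators (G : SimpleGraph V) : Set (V → ℝ) :=
  {y | (∀ i, y i = 0 ∨ y i = 1) ∧ ∀ i j, G.Adj i j → y i + y j ≤ 1}

lemma SimpleGraph.image_funCongrLeft_stableIndicators (G : SimpleGraph V) (e : W ≃ V) :
    LinearEquiv.funCongrLeft ℝ ℝ e '' G.stableIndicators = (G.comap e).stableIndicators := by
  ext y
  simp only [stableIndicators, LinearEquiv.image_eq_preimage_symm, mem_preimage, mem_ofPred_eq,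
    LinearEquiv.funCongrLeft_symm, LinearEquiv.funCongrLeft_apply, LinearMap.funLeft_apply,
    SimpleGraph.comap_adj, e.symm.forall_congr_left, Equiv.symm_symm, Equiv.symm_apply_apply]

end StableIndicators

namespace Idx

instance (n : ℕ) : DecidableEq (Idx n) :=
  inferInstanceAs (DecidableEq {p : Fin n × Fin n // p.1 ≤ p.2})

instance (n : ℕ) : Fintype (Idx n) :=
  inferInstanceAs (Fintype {p : Fin n × Fin n // p.1 ≤ p.2})

variable {n : ℕ}

def fst (p : Idx n) : Fin n := p.1.1

def snd (p : Idx n) : Fin n := p.1.2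

def diag (j : Fin n) : Idx n := ⟨(j, j), le_refl j⟩

@[simp] lemma fst_diag (j : Fin n) : (diag j).fst = j := rfl

@[simp] lemma snd_diag (j : Fin n) : (diag j).snd = j := rfl

lemma fst_le_snd (p : Idx n) : p.fst ≤ p.snd := p.2

lemma eq_diag_of_fst_eq_snd {p : Idx n} (h : p.fst = p.snd) : p = diag p.snd :=
  Subtype.ext (Prod.ext h rfl)

lemma two_mul_card (n : ℕ) : 2 * Fintype.card (Idx n) = n * (n + 1) := by
  have hcard : Fintype.card (Idx n) = Fintype.card (Sym2 (Fin n)) :=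
    Fintype.card_congr Sym2.sortEquiv.symm
  rw [hcard, Sym2.card, Fintype.card_fin, Nat.choose_two_right, Nat.add_sub_cancel,
    Nat.mul_comm (n + 1)]
  exact Nat.mul_div_cancel' (Nat.even_mul_succ_self n).two_dvd

end Idx

lemma add_add_le_one_of_pairwise {a b c : ℝ} (ha : a = 0 ∨ a = 1) (hb : b = 0 ∨ b = 1)
    (hc : c = 0 ∨ c = 1) (hab : a + b ≤ 1) (hac : a + c ≤ 1) (hbc : b + c ≤ 1) :
    a + b + c ≤ 1 := by
  rcases ha with rfl | rfl <;> rcases hb with rfl | rfl <;> rcases hc with rfl | rfl <;>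
    norm_num at *

namespace BQP

open Idx

variable {n : ℕ}

def encodeCoord : Idx n × Bool → (Idx n → ℝ) →ₗ[ℝ] ℝ
  | (p, true) => LinearMap.proj p
  | (p, false) => if p.fst = p.snd then -LinearMap.proj p else
      LinearMap.proj (R := ℝ) (φ := fun _ => ℝ) (diag p.snd) - LinearMap.proj p

def encode (n : ℕ) : (Idx n → ℝ) →ᵃ[ℝ] (Idx n × Bool → ℝ) where
  toFun x
    | (p, true) => x p
    | (p, false) => (if p.fst = p.snd then 1 else x (diag p.snd)) - x p
  linear := LinearMap.pi encodeCoord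
  map_vadd' x v := by
    ext ⟨p, _ | _⟩
    · by_cases h : p.fst = p.snd <;> simp [encodeCoord, h] <;> ring
    · simp [encodeCoord]

@[simp] lemma encode_true (x : Idx n → ℝ) (p : Idx n) : encode n x (p, true) = x p := rfl

lemma encode_false_of_eq (x : Idx n → ℝ) {p : Idx n} (h : p.fst = p.snd) :
    encode n x (p, false) = 1 - x p := by simp [encode, h]

lemma encode_false_of_lt (x : Idx n → ℝ) {p : Idx n} (h : p.fst < p.snd) :
    encode n x (p, false) = x (diag p.snd) - x p := by simp [encode, h.ne]

@[simp] lemma encode_diag_false (x : Idx n → ℝ) (j : Fin n) :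
    encode n x (diag j, false) = 1 - x (diag j) :=
  encode_false_of_eq x rfl

lemma encode_injective : Function.Injective (encode n) := fun x y h =>
  funext fun p => by simpa using congrFun h (p, true)

lemma mul_diag_of_mem {x : Idx n → ℝ} (hx : x ∈ BQP n) (p : Idx n) :
    x p = x (diag p.fst) * x (diag p.snd) := by
  rcases (fst_le_snd p).lt_or_eq with h | h
  · exact hx.2 _ _ h
  · rw [h, ← eq_diag_of_fst_eq_snd h]
    rcases hx.1 p with h0 | h0 <;> simp [h0]

/-- Pulled back along `encode`, the edges at `(p, b)` with `p = (i, j)`, `i < j`, are the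
McCormick inequalities `0 ≤ x_ij`, `x_ij ≤ x_ii`, `x_ij ≤ x_jj` and `x_ii + x_jj - x_ij ≤ 1`. -/
def graphRel (u v : Idx n × Bool) : Prop :=
  v = (u.1, !u.2) ∨ u.1.fst < u.1.snd ∧ (v = (diag u.1.fst, !u.2) ∨ v = (diag u.1.snd, false))

def graph (n : ℕ) : SimpleGraph (Idx n × Bool) := SimpleGraph.fromRel graphRel

lemma graph_adj_not (p : Idx n) (b : Bool) : (graph n).Adj (p, b) (p, !b) :=
  (SimpleGraph.fromRel_adj _ _ _).2 ⟨by simp, Or.inl (Or.inl rfl)⟩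

lemma graph_adj_diag_fst {p : Idx n} (h : p.fst < p.snd) (b : Bool) :
    (graph n).Adj (p, b) (diag p.fst, !b) :=
  (SimpleGraph.fromRel_adj _ _ _).2
    ⟨fun heq => h.ne' (congrArg (fun u => u.1.snd) heq), Or.inl (Or.inr ⟨h, Or.inl rfl⟩)⟩

lemma graph_adj_diag_snd {p : Idx n} (h : p.fst < p.snd) (b : Bool) :
    (graph n).Adj (p, b) (diag p.snd, false) :=
  (SimpleGraph.fromRel_adj _ _ _).2
    ⟨fun heq => h.ne (congrArg (fun u => u.1.fst) heq), Or.inl (Or.inr ⟨h, Or.inr rfl⟩)⟩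

def cliqueSum (p : Idx n) : StrongDual ℝ (Idx n × Bool → ℝ) :=
  if p.fst < p.snd then .proj (p, true) + .proj (p, false) + .proj (diag p.snd, false)
  else .proj (p, true) + .proj (p, false)

lemma cliqueSum_apply_of_lt {p : Idx n} (h : p.fst < p.snd) (z : Idx n × Bool → ℝ) :
    cliqueSum p z = z (p, true) + z (p, false) + z (diag p.snd, false) := by
  simp [cliqueSum, h]

lemma cliqueSum_apply_of_eq {p : Idx n} (h : p.fst = p.snd) (z : Idx n × Bool → ℝ) :
    cliqueSum p z = z (p, true) + z (p, false) := by
  simp [cliqueSum, h]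

def weight (n : ℕ) : StrongDual ℝ (Idx n × Bool → ℝ) := ∑ p, cliqueSum p

lemma cliqueSum_le_one {z : Idx n × Bool → ℝ} (hz : z ∈ (graph n).stableIndicators)
    (p : Idx n) : cliqueSum p z ≤ 1 := by
  rcases (fst_le_snd p).lt_or_eq with h | h
  · rw [cliqueSum_apply_of_lt h]
    exact add_add_le_one_of_pairwise (hz.1 _) (hz.1 _) (hz.1 _)
      (hz.2 _ _ (graph_adj_not p true)) (hz.2 _ _ (graph_adj_diag_snd h true))
      (hz.2 _ _ (graph_adj_diag_snd h false))
  · rw [cliqueSum_apply_of_eq h]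
    exact hz.2 _ _ (graph_adj_not p true)

lemma weight_le_card {z : Idx n × Bool → ℝ} (hz : z ∈ (graph n).stableIndicators) :
    weight n z ≤ Fintype.card (Idx n) := by
  have := Finset.sum_le_card_nsmul Finset.univ _ 1 fun p _ => cliqueSum_le_one hz p
  simpa [weight] using this

lemma cliqueSum_encode (x : Idx n → ℝ) (p : Idx n) : cliqueSum p (encode n x) = 1 := by
  rcases (fst_le_snd p).lt_or_eq with h | h
  · rw [cliqueSum_apply_of_lt h, encode_true, encode_false_of_lt x h, encode_diag_false]
    ring
  · rw [cliqueSum_apply_of_eq h, encode_true, encode_false_of_eq x h]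
    ring

lemma weight_encode (x : Idx n → ℝ) : weight n (encode n x) = Fintype.card (Idx n) := by
  simp [weight, cliqueSum_encode]

lemma cliqueSum_eq_one_of_weight_eq {z : Idx n × Bool → ℝ} (hz : z ∈ (graph n).stableIndicators)
    (hw : weight n z = Fintype.card (Idx n)) (p : Idx n) : cliqueSum p z = 1 := by
  have hsum : ∑ p, cliqueSum p z = ∑ _p : Idx n, (1 : ℝ) := by simpa [weight] using hw
  exact (Finset.sum_eq_sum_iff_of_le fun p _ => cliqueSum_le_one hz p).1 hsum p
    (Finset.mem_univ p)

lemma encode_mem_stableIndicators {x : Idx n → ℝ} (hx : x ∈ BQP n) :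
    encode n x ∈ (graph n).stableIndicators := by
  have hdiag : ∀ i, x (diag i) = 0 ∨ x (diag i) = 1 := fun i => hx.1 (diag i)
  refine ⟨?_, ?_⟩
  · rintro ⟨p, _ | _⟩
    · rcases (fst_le_snd p).lt_or_eq with h | h
      · rw [encode_false_of_lt x h, mul_diag_of_mem hx p]
        rcases hdiag p.fst with h1 | h1 <;> rcases hdiag p.snd with h2 | h2 <;> simp [h1, h2]
      · rw [encode_false_of_eq x h]
        rcases hx.1 p with h0 | h0 <;> simp [h0]
    · exact hx.1 p
  suffices hrel : ∀ u v, graphRel u v → encode n x u + encode n x v ≤ 1 by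
    intro u v huv
    rcases ((SimpleGraph.fromRel_adj _ _ _).1 huv).2 with h | h
    · exact hrel u v h
    · linarith [hrel v u h]
  rintro ⟨p, b⟩ v (rfl | ⟨h, rfl | rfl⟩)
  · rcases (fst_le_snd p).lt_or_eq with h | h
    · have := (hdiag p.snd).elim (fun h => h.le.trans zero_le_one) (fun h => h.le)
      cases b <;> simp [encode_false_of_lt x h, this]
    · cases b <;> simp [encode_false_of_eq x h]
  -- The remaining edges are McCormick inequalities: check them at the four values of `x_ii, x_jj`.
  all_goals
    cases b <;>
    simp only [Bool.not_true, Bool.not_false, encode_true, encode_false_of_lt x h,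
      encode_diag_false, mul_diag_of_mem hx p] <;>
    rcases hdiag p.fst with h1 | h1 <;> rcases hdiag p.snd with h2 | h2 <;> simp [h1, h2]

lemma encode_eq_of_cliqueSum_eq_one {z : Idx n × Bool → ℝ} (h1 : ∀ p, cliqueSum p z = 1) :
    encode n (fun p => z (p, true)) = z := by
  ext ⟨p, _ | _⟩
  · have hp := h1 p
    rcases (fst_le_snd p).lt_or_eq with h | h
    · have hj := h1 (diag p.snd)
      rw [cliqueSum_apply_of_lt h] at hp
      rw [cliqueSum_apply_of_eq rfl] at hj
      rw [encode_false_of_lt _ h]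
      linarith
    · rw [cliqueSum_apply_of_eq h] at hp
      rw [encode_false_of_eq _ h]
      linarith
  · rfl

lemma mem_BQP_of_cliqueSum_eq_one {z : Idx n × Bool → ℝ} (hz : z ∈ (graph n).stableIndicators)
    (h1 : ∀ p, cliqueSum p z = 1) : (fun p => z (p, true)) ∈ BQP n := by
  refine ⟨fun p => hz.1 (p, true), fun i j hij => ?_⟩
  set p : Idx n := ⟨(i, j), hij.le⟩
  have h : p.fst < p.snd := hij
  have hp : z (p, true) + z (p, false) + z (diag j, false) = 1 :=
    (cliqueSum_apply_of_lt h z).symm.trans (h1 p)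
  have hi : z (diag i, true) + z (diag i, false) = 1 :=
    (cliqueSum_apply_of_eq rfl z).symm.trans (h1 (diag i))
  have hj : z (diag j, true) + z (diag j, false) = 1 :=
    (cliqueSum_apply_of_eq rfl z).symm.trans (h1 (diag j))
  have e1 : z (p, true) + z (diag i, false) ≤ 1 := hz.2 _ _ (graph_adj_diag_fst h true)
  have e2 : z (p, false) + z (diag i, true) ≤ 1 := hz.2 _ _ (graph_adj_diag_fst h false)
  have hnonneg : ∀ v, 0 ≤ z v := fun v => (hz.1 v).elim (·.ge) (fun h => h ▸ zero_le_one)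
  have hc := hnonneg (p, true)
  have hd := hnonneg (p, false)
  show z (p, true) = z (diag i, true) * z (diag j, true)
  rcases hz.1 (diag i, true) with ha | ha <;> rcases hz.1 (diag j, true) with hb | hb <;>
    rw [ha, hb] <;> linarith

lemma zero_mem : (0 : Idx n → ℝ) ∈ BQP n :=
  ⟨fun _ => Or.inl rfl, fun _ _ _ => (zero_mul 0).symm⟩

lemma image_encode :
    encode n '' BQP n = (graph n).stableIndicators ∩ {z | weight n z = Fintype.card (Idx n)} := by
  ext z
  constructor
  · rintro ⟨x, hx, rfl⟩
    exact ⟨encode_mem_stableIndicators hx, weight_encode x⟩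
  · rintro ⟨hz, hw⟩
    have h1 := cliqueSum_eq_one_of_weight_eq hz hw
    exact ⟨_, mem_BQP_of_cliqueSum_eq_one hz h1, encode_eq_of_cliqueSum_eq_one h1⟩

theorem image_encode_convexHull :
    encode n '' convexHull ℝ (BQP n) =
      (weight n).toExposed (convexHull ℝ (graph n).stableIndicators) :=
  (encode n).image_convexHull_eq_toExposed ⟨0, zero_mem⟩ (fun _ hz => weight_le_card hz)
    image_encode

end BQP

theorem stmt1_general (n : ℕ) :
    ∃ G : SimpleGraph (Fin (n * (n + 1))),
      ∃ F : Set (Fin (n * (n + 1)) → ℝ),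
        IsExposed ℝ (convexHull ℝ (SSP G)) F ∧
        ∃ φ : (Idx n → ℝ) →ᵃ[ℝ] (Fin (n * (n + 1)) → ℝ),
          Function.Injective φ ∧ φ '' (convexHull ℝ (BQP n)) = F := by
  have hcard : Fintype.card (Idx n × Bool) = n * (n + 1) := by
    rw [Fintype.card_prod, Fintype.card_bool, mul_comm, Idx.two_mul_card]
  let e : Fin (n * (n + 1)) ≃ Idx n × Bool := (Fintype.equivFinOfCardEq hcard).symm
  let T := (LinearEquiv.funCongrLeft ℝ ℝ e).toContinuousLinearEquiv
  let G := (BQP.graph n).comap e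
  let l := BQP.weight n ∘L (T.symm : (Fin (n * (n + 1)) → ℝ) →L[ℝ] _)
  refine ⟨G, l.toExposed (convexHull ℝ (SSP G)), ContinuousLinearMap.toExposed.isExposed,
    (T : (Idx n × Bool → ℝ) →ₗ[ℝ] Fin (n * (n + 1)) → ℝ).toAffineMap.comp (BQP.encode n),
    T.injective.comp BQP.encode_injective, ?_⟩
  calc _ = T '' (BQP.encode n '' convexHull ℝ (BQP n)) := by
        rw [AffineMap.coe_comp, image_comp]; rfl
    _ = T '' (BQP.weight n).toExposed (convexHull ℝ (BQP.graph n).stableIndicators) := by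
        rw [BQP.image_encode_convexHull]
    _ = l.toExposed (T '' convexHull ℝ (BQP.graph n).stableIndicators) := T.image_toExposed _ _
    _ = l.toExposed (convexHull ℝ (SSP G)) := by
        change _ = l.toExposed (convexHull ℝ G.stableIndicators)
        rw [← (BQP.graph n).image_funCongrLeft_stableIndicators e]
        exact congrArg l.toExposed
          ((LinearEquiv.funCongrLeft ℝ ℝ e).toLinearMap.image_convexHull _)

/-- For every `n ≥ 1` there is a graph `G` on `k = n(n+1)` vertices such that
`conv(BQP_n)` is affinely equivalent to an exposed face of `conv(SSP(G))`. -/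
theorem stmt1 (n : ℕ) (hn : 1 ≤ n) :
    ∃ G : SimpleGraph (Fin (n * (n + 1))),
      ∃ F : Set (Fin (n * (n + 1)) → ℝ),
        IsExposed ℝ (convexHull ℝ (SSP G)) F ∧
        ∃ φ : (Idx n → ℝ) →ᵃ[ℝ] (Fin (n * (n + 1)) → ℝ),
          Function.Injective φ ∧ φ '' (convexHull ℝ (BQP n)) = F :=
  stmt1_general n
end

section
/- For every simple graph G on k vertices with edge set E, there exists a matrix B ∈ {0,1}^{|E|×d} with d = k + |E| + 1, each of whose rows contains exactly four entries equal to 1, such that conv(SSP(G)) is affinely equivalent to an exposed face of the double covering polytope conv(DCP(B)). (Concretely, for each edge {i,j} one adds a slack coordinate u_{ij} and one global coordinate u_0, with rows encoding y_i + y_j + u_{ij} + u_0 = 2, and the face is given by u_0 = 1.) -/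
/-- The double covering vertex set of a 0/1 matrix `B`
(each row of `B` is supposed to contain exactly four 1's). -/
def DCP {m d : ℕ} (B : Fin m → Fin d → ℝ) : Set (Fin d → ℝ) :=
  {x | (∀ j, x j = 0 ∨ x j = 1) ∧ ∀ i, ∑ j, B i j * x j = 2}

open Set

section ConvexFaces

variable {E : Type*} [AddCommGroup E] [Module ℝ E] {s : Set E} {c : ℝ}

theorem convexHull_inter_hyperplane_of_le {l : E →ₗ[ℝ] ℝ} (hs : ∀ x ∈ s, l x ≤ c) :
    convexHull ℝ s ∩ {x | l x = c} = convexHull ℝ (s ∩ {x | l x = c}) := by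
  refine Subset.antisymm ?_ (subset_inter (convexHull_mono inter_subset_left)
    (convexHull_min inter_subset_right (convex_hyperplane l.isLinear c)))
  rintro _ ⟨hx, hxc⟩
  obtain ⟨ι, t, w, z, hw₀, hw₁, hz, rfl⟩ := (convexHull_eq s).subset hx
  have hdefect : ∑ i ∈ t, w i * (c - l (z i)) = 0 := by
    rw [mem_ofPred_eq, Finset.centerMass_eq_of_sum_1 _ _ hw₁, map_sum] at hxc
    simp only [map_smul, smul_eq_mul] at hxc
    rw [← hxc]
    simp only [mul_sub, Finset.sum_sub_distrib, ← Finset.sum_mul, hw₁, one_mul, sub_self]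
  have hface : ∀ i ∈ t, w i ≠ 0 → l (z i) = c := fun i hi hwi => by
    have hterm := (Finset.sum_eq_zero_iff_of_nonneg fun j hj =>
      mul_nonneg (hw₀ j hj) (sub_nonneg.2 (hs _ (hz j hj)))).1 hdefect i hi
    linarith [(mul_eq_zero.1 hterm).resolve_left hwi]
  rw [← Finset.centerMass_filter_ne_zero]
  refine Finset.centerMass_mem_convexHull _ (fun i hi => hw₀ i (Finset.mem_filter.1 hi).1)
    (by rw [Finset.sum_filter_ne_zero, hw₁]; exact one_pos) fun i hi => ?_
  obtain ⟨hit, hwi⟩ := Finset.mem_filter.1 hi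
  exact ⟨hz i hit, hface i hit hwi⟩

theorem isExposed_convexHull_inter_hyperplane_of_le [TopologicalSpace E] {l : StrongDual ℝ E}
    (hs : ∀ x ∈ s, l x ≤ c) :
    IsExposed ℝ (convexHull ℝ s) (convexHull ℝ (s ∩ {x | l x = c})) := by
  have hle : ∀ x ∈ convexHull ℝ s, l x ≤ c :=
    fun x hx => convexHull_min hs (convex_halfSpace_le l.isLinear c) hx
  rw [← show convexHull ℝ s ∩ {x | l x = c} = convexHull ℝ (s ∩ {x | l x = c}) from
    convexHull_inter_hyperplane_of_le (l := (l : E →ₗ[ℝ] ℝ)) hs]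
  rintro ⟨x₀, hx₀, hx₀c⟩
  refine ⟨l, Subset.antisymm (fun x ⟨hx, hxc⟩ => ⟨hx, fun y hy => ?_⟩)
    fun x ⟨hx, hmax⟩ => ⟨hx, le_antisymm (hle x hx) ?_⟩⟩
  · exact (hle y hy).trans_eq hxc.symm
  · exact hx₀c.symm.trans_le (hmax x₀ hx₀)

end ConvexFaces

theorem SimpleGraph.exists_edge_enumeration {V : Type*} (G : SimpleGraph V) [Fintype G.edgeSet] :
    ∃ a b : Fin G.edgeFinset.card → V, (∀ r, G.Adj (a r) (b r)) ∧
      ∀ i j, G.Adj i j → ∃ r, s(a r, b r) = s(i, j) := by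
  have hrep : ∀ e : Sym2 V, ∃ p : V × V, s(p.1, p.2) = e := Sym2.ind fun x y => ⟨(x, y), rfl⟩
  choose p hp using fun r => hrep (G.edgeFinset.equivFin.symm r)
  refine ⟨fun r => (p r).1, fun r => (p r).2, fun r => ?_, fun i j hij => ?_⟩
  · rw [← G.mem_edgeSet, hp, ← G.mem_edgeFinset]
    exact Finset.coe_mem _
  · refine ⟨G.edgeFinset.equivFin ⟨s(i, j), G.mem_edgeFinset.2 hij⟩, ?_⟩
    rw [hp, Equiv.symm_apply_apply]

def indicatorMatrix {m d : ℕ} (S : Fin m → Finset (Fin d)) : Fin m → Fin d → ℝ :=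
  fun r j => if j ∈ S r then 1 else 0

section IndicatorMatrix

variable {m d : ℕ} (S : Fin m → Finset (Fin d))

theorem indicatorMatrix_eq_zero_or_one (r : Fin m) (j : Fin d) :
    indicatorMatrix S r j = 0 ∨ indicatorMatrix S r j = 1 := by
  unfold indicatorMatrix
  split_ifs <;> simp

theorem filter_indicatorMatrix_eq_one (r : Fin m) :
    Finset.univ.filter (fun j => indicatorMatrix S r j = 1) = S r := by
  ext j
  by_cases hj : j ∈ S r <;> simp [indicatorMatrix, hj]

theorem sum_indicatorMatrix_mul (r : Fin m) (x : Fin d → ℝ) :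
    ∑ j, indicatorMatrix S r j * x j = ∑ j ∈ S r, x j := by
  simp only [indicatorMatrix, ite_mul, one_mul, zero_mul, Finset.sum_ite_mem, Finset.univ_inter]

end IndicatorMatrix

namespace StableSetFace

variable {k m : ℕ}

-- Columns `0, …, k - 1` hold the vertex coordinates `y`, columns `k, …, k + m - 1` the edge
-- slacks `u_{ij}`, and the last column the global coordinate `u₀`.
def vertexCol (i : Fin k) : Fin (k + m + 1) := (Fin.castAdd m i).castSucc

def edgeCol (r : Fin m) : Fin (k + m + 1) := (Fin.natAdd k r).castSucc

theorem col_cases {P : Fin (k + m + 1) → Prop} (vertex : ∀ i, P (vertexCol i))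
    (edge : ∀ r, P (edgeCol r)) (global : P (Fin.last (k + m))) (j : Fin (k + m + 1)) : P j :=
  Fin.lastCases global (fun j => Fin.addCases (motive := fun j => P j.castSucc) vertex edge j) j

theorem vertexCol_injective : Function.Injective (vertexCol (k := k) (m := m)) :=
  (Fin.castSucc_injective _).comp (Fin.castAdd_injective _ _)

theorem vertexCol_ne_edgeCol (i : Fin k) (r : Fin m) : vertexCol i ≠ edgeCol r := by
  rw [vertexCol, edgeCol, ne_eq, Fin.ext_iff, Fin.val_castSucc, Fin.val_castSucc, Fin.val_castAdd,
    Fin.val_natAdd]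
  omega

theorem vertexCol_ne_last (i : Fin k) : vertexCol (m := m) i ≠ Fin.last (k + m) :=
  Fin.castSucc_ne_last _

theorem edgeCol_ne_last (r : Fin m) : edgeCol (k := k) r ≠ Fin.last (k + m) :=
  Fin.castSucc_ne_last _

variable (a b : Fin m → Fin k)

/-- The support of the row `y_{a r} + y_{b r} + u_r + u₀ = 2` of the edge `r = {a r, b r}`. -/
def edgeSupport (r : Fin m) : Finset (Fin (k + m + 1)) :=
  {vertexCol (a r), vertexCol (b r), edgeCol r, Fin.last (k + m)}

def edgeMatrix : Fin m → Fin (k + m + 1) → ℝ := indicatorMatrix (edgeSupport a b)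

variable {a b}

theorem card_edgeSupport {r : Fin m} (hr : a r ≠ b r) : (edgeSupport a b r).card = 4 := by
  rw [edgeSupport, Finset.card_insert_of_notMem, Finset.card_insert_of_notMem,
    Finset.card_pair (edgeCol_ne_last r)]
  · simp [vertexCol_ne_edgeCol, vertexCol_ne_last]
  · simp [vertexCol_injective.eq_iff, hr, vertexCol_ne_edgeCol, vertexCol_ne_last]

theorem sum_edgeMatrix_mul {r : Fin m} (hr : a r ≠ b r) (x : Fin (k + m + 1) → ℝ) :
    ∑ j, edgeMatrix a b r j * x j =
      x (vertexCol (a r)) + x (vertexCol (b r)) + x (edgeCol r) + x (Fin.last (k + m)) := by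
  rw [edgeMatrix, sum_indicatorMatrix_mul, edgeSupport, Finset.sum_insert, Finset.sum_insert,
    Finset.sum_pair (edgeCol_ne_last r)]
  · ring
  · simp [vertexCol_ne_edgeCol, vertexCol_ne_last]
  · simp [vertexCol_injective.eq_iff, hr, vertexCol_ne_edgeCol, vertexCol_ne_last]

variable (a b)

/-- `y ↦ (y, (1 - y_{a r} - y_{b r})_r, 1)`. -/
def stableSetEmbedding : (Fin k → ℝ) →ᵃ[ℝ] (Fin (k + m + 1) → ℝ) :=
  AffineMap.pi fun j => Fin.lastCases (AffineMap.const ℝ _ 1) (fun j => Fin.addCases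
    (fun i => (LinearMap.proj i).toAffineMap)
    (fun r => AffineMap.const ℝ _ 1 - (LinearMap.proj (a r)).toAffineMap -
      (LinearMap.proj (b r)).toAffineMap) j) j

@[simp]
theorem stableSetEmbedding_vertexCol (y : Fin k → ℝ) (i : Fin k) :
    stableSetEmbedding a b y (vertexCol i) = y i := by
  rw [stableSetEmbedding, AffineMap.pi_apply, vertexCol, Fin.lastCases_castSucc, Fin.addCases_left]
  rfl

@[simp]
theorem stableSetEmbedding_edgeCol (y : Fin k → ℝ) (r : Fin m) :
    stableSetEmbedding a b y (edgeCol r) = 1 - y (a r) - y (b r) := by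
  rw [stableSetEmbedding, AffineMap.pi_apply, edgeCol, Fin.lastCases_castSucc, Fin.addCases_right]
  rfl

@[simp]
theorem stableSetEmbedding_last (y : Fin k → ℝ) :
    stableSetEmbedding a b y (Fin.last (k + m)) = 1 := by
  rw [stableSetEmbedding, AffineMap.pi_apply, Fin.lastCases_last]
  rfl

theorem stableSetEmbedding_injective : Function.Injective (stableSetEmbedding a b) :=
  fun y y' h => funext fun i => by
    simpa using congrFun h (vertexCol i)

variable {G : SimpleGraph (Fin k)} {a b}

theorem stableSetEmbedding_mem_DCP (hadj : ∀ r, G.Adj (a r) (b r)) {y : Fin k → ℝ}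
    (hy : y ∈ SSP G) : stableSetEmbedding a b y ∈ DCP (edgeMatrix a b) := by
  obtain ⟨hy01, hyG⟩ := hy
  refine ⟨fun j => ?_, fun r => ?_⟩
  · induction j using col_cases with
    | vertex i => simpa using hy01 i
    | edge r =>
      have hle := hyG _ _ (hadj r)
      rw [stableSetEmbedding_edgeCol]
      rcases hy01 (a r) with h | h <;> rcases hy01 (b r) with h' | h' <;> norm_num [h, h']
      linarith -- the case `y (a r) = y (b r) = 1`, excluded by `hle`
    | global => simp
  · rw [sum_edgeMatrix_mul (hadj r).ne]
    simp only [stableSetEmbedding_vertexCol, stableSetEmbedding_edgeCol, stableSetEmbedding_last]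
    norm_num

variable {x : Fin (k + m + 1) → ℝ}

theorem mem_SSP_of_mem_DCP (hab : ∀ r, a r ≠ b r) (hx : x ∈ DCP (edgeMatrix a b))
    (hx₁ : x (Fin.last (k + m)) = 1) (hcover : ∀ i j, G.Adj i j → ∃ r, s(a r, b r) = s(i, j)) :
    (fun i => x (vertexCol i)) ∈ SSP G := by
  refine ⟨fun i => hx.1 _, fun i j hij => ?_⟩
  obtain ⟨r, hr⟩ := hcover i j hij
  have hslack : 0 ≤ x (edgeCol r) := by rcases hx.1 (edgeCol r) with h | h <;> simp [h]
  have hrow := hx.2 r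
  rw [sum_edgeMatrix_mul (hab r), hx₁] at hrow
  rcases Sym2.eq_iff.1 hr with ⟨rfl, rfl⟩ | ⟨rfl, rfl⟩ <;> linarith

theorem stableSetEmbedding_comp_vertexCol (hab : ∀ r, a r ≠ b r) (hx : x ∈ DCP (edgeMatrix a b))
    (hx₁ : x (Fin.last (k + m)) = 1) :
    stableSetEmbedding a b (fun i => x (vertexCol i)) = x := by
  funext j
  induction j using col_cases with
  | vertex i => simp
  | edge r =>
    have hrow := hx.2 r
    rw [sum_edgeMatrix_mul (hab r), hx₁] at hrow
    rw [stableSetEmbedding_edgeCol]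
    linarith
  | global => simp [hx₁]

theorem image_stableSetEmbedding_SSP (hadj : ∀ r, G.Adj (a r) (b r))
    (hcover : ∀ i j, G.Adj i j → ∃ r, s(a r, b r) = s(i, j)) :
    stableSetEmbedding a b '' SSP G = DCP (edgeMatrix a b) ∩ {x | x (Fin.last (k + m)) = 1} := by
  have hab r : a r ≠ b r := (hadj r).ne
  refine Subset.antisymm ?_ fun x ⟨hx, hx₁⟩ =>
    ⟨_, mem_SSP_of_mem_DCP hab hx hx₁ hcover, stableSetEmbedding_comp_vertexCol hab hx hx₁⟩
  rintro _ ⟨y, hy, rfl⟩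
  exact ⟨stableSetEmbedding_mem_DCP hadj hy, stableSetEmbedding_last a b y⟩

end StableSetFace

open StableSetFace

/-- For every graph `G` on `k` vertices with edge set `E` there is a 0/1 matrix `B`
with `|E|` rows and `d = k + |E| + 1` columns, each row containing exactly four 1's,
such that `conv(SSP(G))` is affinely equivalent to an exposed face of `conv(DCP(B))`. -/
theorem stmt6 (k : ℕ) (G : SimpleGraph (Fin k)) [DecidableRel G.Adj] :
    ∃ B : Fin G.edgeFinset.card → Fin (k + G.edgeFinset.card + 1) → ℝ,
      (∀ i j, B i j = 0 ∨ B i j = 1) ∧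
      (∀ i, (Finset.univ.filter (fun j => B i j = 1)).card = 4) ∧
      ∃ F : Set (Fin (k + G.edgeFinset.card + 1) → ℝ),
        IsExposed ℝ (convexHull ℝ (DCP B)) F ∧
        ∃ φ : (Fin k → ℝ) →ᵃ[ℝ] (Fin (k + G.edgeFinset.card + 1) → ℝ),
          Function.Injective φ ∧ φ '' (convexHull ℝ (SSP G)) = F := by
  obtain ⟨a, b, hadj, hcover⟩ := G.exists_edge_enumeration
  have hglobal_le : ∀ x ∈ DCP (edgeMatrix a b),
      ContinuousLinearMap.proj (R := ℝ) (Fin.last (k + G.edgeFinset.card)) x ≤ 1 :=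
    fun x hx => (hx.1 _).elim (fun h => h.trans_le zero_le_one) le_of_eq
  refine ⟨edgeMatrix a b, indicatorMatrix_eq_zero_or_one _, fun r => ?_, _,
    isExposed_convexHull_inter_hyperplane_of_le hglobal_le, stableSetEmbedding a b,
    stableSetEmbedding_injective a b, ?_⟩
  · rw [edgeMatrix, filter_indicatorMatrix_eq_one, card_edgeSupport (hadj r).ne]
  · rw [AffineMap.image_convexHull, image_stableSetEmbedding_SSP hadj hcover]
    rfl
end

section
/- Let G be a simple graph on Fin k and let y¹, y², y³, y⁴, y⁵, y⁶ ∈ SSP(G) be pairwise distinct with y¹ + y² = y³ + y⁴ = y⁵ + y⁶ (sum of vectors in ℝ^k). Then there exist y⁷, y⁸ ∈ SSP(G), distinct from each other and from each of y¹,…,y⁶, such that y⁷ + y⁸ = y¹ + y². Consequently conv{y¹,…,y⁶} is not a face of conv(SSP(G)). -/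
/-!
Write `x, x', u, u', v, v'` for `y¹, …, y⁶` and let `z` take the values of `x` where `u` and `v`
agree and those of `x'` elsewhere (coordinatewise `z = x ⊕ u ⊕ v`); `z'` is built likewise with
`x, x'` exchanged, so `z + z' = x + x'`. Where `u` and `v` differ, `x + x' = 1`; and along an edge
`ij` with `(x + x')ᵢ = (x + x')ⱼ = 1` every decomposition of `x + x'` into stable sets takes
complementary values at `i` and `j`. Hence `z` cannot put `1` on both ends of an edge. If `z`
equalled one of the six vectors, a coordinatewise check would force two of them to coincide.

For the second claim, `(y¹ + y²)/2 = (z + z')/2` lies in the open segment `(z, z')`, so a face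
containing `conv{y¹, …, y⁶}` contains `z`. But a `0/1` vector is a vertex of the unit cube, so it
lies in the convex hull of a set of `0/1` vectors only if it belongs to that set.
-/

open Set

section ZeroOne

variable {a a' b b' c c' : ℝ}

lemma add_eq_one_of_add_eq_of_ne (hb : b = 0 ∨ b = 1) (hb' : b' = 0 ∨ b' = 1)
    (hc : c = 0 ∨ c = 1) (hc' : c' = 0 ∨ c' = 1) (h : b + b' = c + c') (hbc : b ≠ c) :
    b + b' = 1 := by
  rcases hb with rfl | rfl <;> rcases hb' with rfl | rfl <;> rcases hc with rfl | rfl <;>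
    rcases hc' with rfl | rfl <;> norm_num at *

lemma eq_of_add_ne_one (ha : a = 0 ∨ a = 1) (ha' : a' = 0 ∨ a' = 1) (h : a + a' ≠ 1) :
    a = a' := by
  rcases ha with rfl | rfl <;> rcases ha' with rfl | rfl <;> norm_num at *

lemma eq_of_ite_eq_of_add_eq (ha : a = 0 ∨ a = 1) (ha' : a' = 0 ∨ a' = 1)
    (hb : b = 0 ∨ b = 1) (hb' : b' = 0 ∨ b' = 1) (hc : c = 0 ∨ c = 1) (hc' : c' = 0 ∨ c' = 1)
    (hab : a + a' = b + b') (hac : a + a' = c + c') :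
    ((if b = c then a else a') = a → b = c) ∧ ((if b = c then a else a') = a' → b' = c) ∧
    ((if b = c then a else a') = b → a = c) ∧ ((if b = c then a else a') = b' → a = c') ∧
    ((if b = c then a else a') = c → a = b) ∧ ((if b = c then a else a') = c' → a = b') := by
  rcases ha with rfl | rfl <;> rcases ha' with rfl | rfl <;> rcases hb with rfl | rfl <;>
    rcases hb' with rfl | rfl <;> rcases hc with rfl | rfl <;> rcases hc' with rfl | rfl <;>
    norm_num at *

end ZeroOne

lemma mem_of_zero_one_mem_convexHull {ι : Type*} {A : Set (ι → ℝ)}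
    (hA : ∀ a ∈ A, ∀ i, a i = 0 ∨ a i = 1) {z : ι → ℝ} (hz : ∀ i, z i = 0 ∨ z i = 1)
    (hzA : z ∈ convexHull ℝ A) : z ∈ A := by
  set cube : Set (ι → ℝ) := univ.pi fun _ ↦ Icc 0 1
  have hA_cube : convexHull ℝ A ⊆ cube := by
    refine convexHull_min (fun a ha i _ ↦ ?_) (convex_pi fun _ _ ↦ convex_Icc 0 1)
    rcases hA a ha i with h | h <;> simp [h]
  have hz_cube : z ∈ cube.extremePoints ℝ := by
    rw [extremePoints_pi]
    intro i _
    rw [extremePoints_Icc zero_le_one]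
    exact hz i
  exact extremePoints_convexHull_subset
    (inter_extremePoints_subset_extremePoints_of_subset hA_cube ⟨hzA, hz_cube⟩)

lemma not_isExtreme_convexHull_of_add_eq {ι : Type*} {S Y : Set (ι → ℝ)}
    (hS : ∀ a ∈ S, ∀ i, a i = 0 ∨ a i = 1) (hYS : Y ⊆ S) {x x' z z' : ι → ℝ} (hx : x ∈ Y)
    (hx' : x' ∈ Y) (hz : z ∈ S) (hz' : z' ∈ S) (hzY : z ∉ Y) (h : z + z' = x + x') :
    ¬ IsExtreme ℝ (convexHull ℝ S) (convexHull ℝ Y) := by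
  intro hface
  have hmid : midpoint ℝ x x' ∈ openSegment ℝ z z' := by
    rw [midpoint_eq_smul_add, ← h, ← midpoint_eq_smul_add]
    exact midpoint_mem_openSegment z z'
  have hz_hull : z ∈ convexHull ℝ Y :=
    hface.left_mem_of_mem_openSegment (subset_convexHull ℝ _ hz) (subset_convexHull ℝ _ hz')
      ((convex_convexHull ℝ _).midpoint_mem (subset_convexHull ℝ _ hx)
        (subset_convexHull ℝ _ hx')) hmid
  exact hzY (mem_of_zero_one_mem_convexHull (fun a ha ↦ hS a (hYS ha)) (hS z hz) hz_hull)

lemma piecewise_add_piecewise_swap {ι M : Type*} [AddCommMagma M] (s : Set ι)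
    [∀ i, Decidable (i ∈ s)] (f g : ι → M) : s.piecewise f g + s.piecewise g f = f + g := by
  ext i
  by_cases hi : i ∈ s <;> simp [hi, add_comm]

lemma piecewise_ne_piecewise_swap {ι α : Type*} (s : Set ι) [∀ i, Decidable (i ∈ s)]
    {f g : ι → α} (h : f ≠ g) : s.piecewise f g ≠ s.piecewise g f := by
  obtain ⟨i, hi⟩ := Function.ne_iff.mp h
  refine Function.ne_iff.mpr ⟨i, ?_⟩
  by_cases hs : i ∈ s <;> simp [hs, hi, Ne.symm hi]

lemma piecewise_notMem_of_zero_one {ι : Type*} {x x' u u' v v' : ι → ℝ}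
    (hx : ∀ i, x i = 0 ∨ x i = 1) (hx' : ∀ i, x' i = 0 ∨ x' i = 1)
    (hu : ∀ i, u i = 0 ∨ u i = 1) (hu' : ∀ i, u' i = 0 ∨ u' i = 1)
    (hv : ∀ i, v i = 0 ∨ v i = 1) (hv' : ∀ i, v' i = 0 ∨ v' i = 1)
    (hsu : x + x' = u + u') (hsv : x + x' = v + v')
    (huv : u ≠ v) (hu'v : u' ≠ v) (hxv : x ≠ v) (hxv' : x ≠ v') (hxu : x ≠ u) (hxu' : x ≠ u') :
    {i | u i = v i}.piecewise x x' ∉ ({x, x', u, u', v, v'} : Set (ι → ℝ)) := by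
  have key i := eq_of_ite_eq_of_add_eq (hx i) (hx' i) (hu i) (hu' i) (hv i) (hv' i)
    (congrFun hsu i) (congrFun hsv i)
  rintro (h | h | h | h | h | h) <;> replace h := congrFun h
  exacts [huv (funext fun i ↦ (key i).1 (h i)), hu'v (funext fun i ↦ (key i).2.1 (h i)),
    hxv (funext fun i ↦ (key i).2.2.1 (h i)), hxv' (funext fun i ↦ (key i).2.2.2.1 (h i)),
    hxu (funext fun i ↦ (key i).2.2.2.2.1 (h i)), hxu' (funext fun i ↦ (key i).2.2.2.2.2 (h i))]

namespace SSP

variable {k : ℕ} {G : SimpleGraph (Fin k)} {x x' u u' v v' : Fin k → ℝ}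

lemma add_eq_one_of_adj (hu : u ∈ SSP G) (hu' : u' ∈ SSP G) {i j : Fin k}
    (hij : G.Adj i j) (hi : u i + u' i = 1) (hj : u j + u' j = 1) : u i + u j = 1 := by
  linarith [hu.2 i j hij, hu'.2 i j hij]

lemma add_le_one_of_adj_of_eq_of_ne (hx : x ∈ SSP G) (hx' : x' ∈ SSP G) (hu : u ∈ SSP G)
    (hu' : u' ∈ SSP G) (hv : v ∈ SSP G) (hv' : v' ∈ SSP G) (hsu : x + x' = u + u')
    (hsv : x + x' = v + v') {i j : Fin k} (hij : G.Adj i j) (hi : u i = v i)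
    (hj : u j ≠ v j) : x i + x' j ≤ 1 := by
  have hsu_at (l : Fin k) : x l + x' l = u l + u' l := congrFun hsu l
  have hsv_at (l : Fin k) : x l + x' l = v l + v' l := congrFun hsv l
  have hj_one : x j + x' j = 1 := (hsu_at j).trans <|
    add_eq_one_of_add_eq_of_ne (hu.1 j) (hu'.1 j) (hv.1 j) (hv'.1 j)
      ((hsu_at j).symm.trans (hsv_at j)) hj
  by_cases hi_one : x i + x' i = 1
  · refine absurd ?_ hj
    have hu_ij := add_eq_one_of_adj hu hu' hij (hsu_at i ▸ hi_one) (hsu_at j ▸ hj_one)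
    have hv_ij := add_eq_one_of_adj hv hv' hij (hsv_at i ▸ hi_one) (hsv_at j ▸ hj_one)
    linarith
  · rw [eq_of_add_ne_one (hx.1 i) (hx'.1 i) hi_one]
    exact hx'.2 i j hij

lemma piecewise_mem (hx : x ∈ SSP G) (hx' : x' ∈ SSP G) (hu : u ∈ SSP G)
    (hu' : u' ∈ SSP G) (hv : v ∈ SSP G) (hv' : v' ∈ SSP G) (hsu : x + x' = u + u')
    (hsv : x + x' = v + v') : {i | u i = v i}.piecewise x x' ∈ SSP G := by
  have mixed {i j} : G.Adj i j → u i = v i → u j ≠ v j → x i + x' j ≤ 1 :=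
    add_le_one_of_adj_of_eq_of_ne hx hx' hu hu' hv hv' hsu hsv
  refine ⟨fun i ↦ ?_, fun i j hij ↦ ?_⟩
  · by_cases hi : u i = v i
    · simpa [hi] using hx.1 i
    · simpa [hi] using hx'.1 i
  by_cases hi : u i = v i <;> by_cases hj : u j = v j <;>
    simp only [piecewise, mem_ofPred_eq, hi, hj, if_true, if_false]
  · exact hx.2 i j hij
  · exact mixed hij hi hj
  · rw [add_comm]
    exact mixed hij.symm hj hi
  · exact hx'.2 i j hij

end SSP

/-- If `y¹, …, y⁶ ∈ SSP(G)` are pairwise distinct with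
`y¹ + y² = y³ + y⁴ = y⁵ + y⁶`, then there are `y⁷, y⁸ ∈ SSP(G)`, distinct from each
other and from `y¹, …, y⁶`, with `y⁷ + y⁸ = y¹ + y²`; consequently
`conv{y¹, …, y⁶}` is not a face (extreme subset) of `conv(SSP(G))`. -/
theorem stmt8 (k : ℕ) (G : SimpleGraph (Fin k)) (y : Fin 6 → (Fin k → ℝ))
    (hy : ∀ i, y i ∈ SSP G) (hinj : Function.Injective y)
    (hsum : y 0 + y 1 = y 2 + y 3 ∧ y 2 + y 3 = y 4 + y 5) :
    (∃ y₇ y₈ : Fin k → ℝ, y₇ ∈ SSP G ∧ y₈ ∈ SSP G ∧ y₇ ≠ y₈ ∧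
      (∀ i, y₇ ≠ y i ∧ y₈ ≠ y i) ∧ y₇ + y₈ = y 0 + y 1) ∧
    ¬ IsExtreme ℝ (convexHull ℝ (SSP G)) (convexHull ℝ (Set.range y)) := by
  have h23 : y 0 + y 1 = y 2 + y 3 := hsum.1
  have h45 : y 0 + y 1 = y 4 + y 5 := hsum.1.trans hsum.2
  have h10 : y 1 + y 0 = y 0 + y 1 := add_comm _ _
  have hne (a b : Fin 6) (hab : a ≠ b := by decide) : y a ≠ y b := hinj.ne hab
  have hbit (a : Fin 6) := (hy a).1
  have hsix (m : Fin 6) : y m ∈ ({y 0, y 1, y 2, y 3, y 4, y 5} : Set _) := by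
    fin_cases m <;> simp
  set s := {i | y 2 i = y 4 i}
  set z := s.piecewise (y 0) (y 1)
  set z' := s.piecewise (y 1) (y 0)
  have hz : z ∈ SSP G := SSP.piecewise_mem (hy 0) (hy 1) (hy 2) (hy 3) (hy 4) (hy 5) h23 h45
  have hz' : z' ∈ SSP G := SSP.piecewise_mem (hy 1) (hy 0) (hy 2) (hy 3) (hy 4) (hy 5)
    (h10.trans h23) (h10.trans h45)
  have hzy (m : Fin 6) : z ≠ y m := fun h ↦
    piecewise_notMem_of_zero_one (hbit 0) (hbit 1) (hbit 2) (hbit 3) (hbit 4) (hbit 5) h23 h45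
      (hne 2 4) (hne 3 4) (hne 0 4) (hne 0 5) (hne 0 2) (hne 0 3) (show z ∈ _ from h ▸ hsix m)
  have hz'y (m : Fin 6) : z' ≠ y m := fun h ↦
    piecewise_notMem_of_zero_one (hbit 1) (hbit 0) (hbit 2) (hbit 3) (hbit 4) (hbit 5)
      (h10.trans h23) (h10.trans h45) (hne 2 4) (hne 3 4) (hne 1 4) (hne 1 5) (hne 1 2) (hne 1 3)
      (show z' ∈ _ from h ▸ insert_comm (y 0) (y 1) _ ▸ hsix m)
  have hzz' : z + z' = y 0 + y 1 := piecewise_add_piecewise_swap s _ _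
  exact ⟨⟨z, z', hz, hz', piecewise_ne_piecewise_swap s (hne 0 1), fun m ↦ ⟨hzy m, hz'y m⟩, hzz'⟩,
    not_isExtreme_convexHull_of_add_eq (fun a ha ↦ ha.1) (range_subset_iff.2 hy)
      (mem_range_self 0) (mem_range_self 1) hz hz' (by rintro ⟨m, hm⟩; exact hzy m hm.symm) hzz'⟩
end

section
/- For every simple graph G on k vertices with edge set E and with W the set of isolated vertices of G (vertices belonging to no edge), setting m = 3|E| + 2|W|, the stable set polytope conv(SSP(G)) is affinely equivalent to an exposed face of the three index assignment polytope conv(TAP_m): there is an exposed face F of conv(TAP_m) and an injective affine map φ : ℝ^k → ℝ^{m³} with φ(conv(SSP(G))) = F. -/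
/-- The vertex set of the (axial) three index assignment polytope. -/
def TAP (m : ℕ) : Set (Fin m × Fin m × Fin m → ℝ) :=
  {x | (∀ q, x q = 0 ∨ x q = 1) ∧
       (∀ u, ∑ s, ∑ t, x (s, t, u) = 1) ∧
       (∀ t, ∑ s, ∑ u, x (s, t, u) = 1) ∧
       (∀ s, ∑ t, ∑ u, x (s, t, u) = 1)}

/-!
A point `y` is sent to a tensor indexed by nodes: the darts of `G` (two per edge), its edges, and
two copies of each isolated vertex, `3|E| + 2|W|` nodes in all. Each entry is an affine form in
`y` (`0`, `y i`, `1 - y i`, or `1 - y a - y b` for an edge `ab`) and all line sums are identically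
`1`, so stable sets go to vertices of the assignment polytope. The entries `1 - y i` link the darts
at each vertex `i` into a single cycle (a rotation system); along it, the line sums force an
assignment vanishing wherever the form is identically zero to give every dart at `i` the same
value, which recovers the stable set. Hence minus the total mass on those cells is a functional
exposing exactly the image of the stable set polytope.
-/

open Finset

section ExposedFace

variable {E F : Type*} [AddCommGroup E] [Module ℝ E] [AddCommGroup F] [Module ℝ F]

theorem convexHull_sep_eq_zero_of_nonpos {T : Set F} {ℓ : F →ₗ[ℝ] ℝ} (hT : ∀ z ∈ T, ℓ z ≤ 0)
    {z₀ : F} (hz₀T : z₀ ∈ T) (hz₀ : ℓ z₀ = 0) :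
    convexHull ℝ {z ∈ T | ℓ z = 0} = {x ∈ convexHull ℝ T | ℓ x = 0} := by
  apply subset_antisymm
  · exact convexHull_min (fun z hz => ⟨subset_convexHull ℝ T hz.1, hz.2⟩)
      ((convex_convexHull ℝ T).inter (convex_hyperplane ℓ.isLinear 0))
  rintro x ⟨hx, hx0⟩
  obtain ⟨ι, _, w, z, hw₀, hw₁, hz, rfl⟩ := mem_convexHull_iff_exists_fintype.1 hx
  have hterm : ∀ i, w i * ℓ (z i) = 0 := by
    simp only [map_sum, map_smul, smul_eq_mul] at hx0
    exact congrFun ((Fintype.sum_eq_zero_iff_of_nonpos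
      fun i => mul_nonpos_of_nonneg_of_nonpos (hw₀ i) (hT _ (hz i))).1 hx0)
  -- points of positive weight lie in the zero set; the others can be moved to `z₀`
  refine mem_convexHull_of_exists_fintype w (fun i => if ℓ (z i) = 0 then z i else z₀) hw₀ hw₁
    (fun i => ?_) (sum_congr rfl fun i _ => ?_)
  · split_ifs with h
    exacts [⟨hz i, h⟩, ⟨hz₀T, hz₀⟩]
  · split_ifs with h
    · rfl
    · rw [(mul_eq_zero.1 (hterm i)).resolve_right h, zero_smul, zero_smul]

theorem isExposed_image_convexHull [TopologicalSpace F] {S : Set E} {T : Set F}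
    (φ : E →ᵃ[ℝ] F) (ℓ : F →L[ℝ] ℝ) (hS : S.Nonempty) (hT : ∀ z ∈ T, ℓ z ≤ 0)
    (hST : φ '' S = {z ∈ T | ℓ z = 0}) :
    IsExposed ℝ (convexHull ℝ T) (φ '' convexHull ℝ S) := by
  refine fun _ => ⟨ℓ, ?_⟩
  have hle : ∀ x ∈ convexHull ℝ T, ℓ x ≤ 0 := fun x hx =>
    convexHull_min hT (convex_halfSpace_le ℓ.toLinearMap.isLinear 0) hx
  obtain ⟨z₀, hz₀T, hz₀⟩ : ∃ z₀ ∈ T, ℓ z₀ = 0 := by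
    obtain ⟨y, hy⟩ := hS
    have hφy : φ y ∈ {z ∈ T | ℓ z = 0} := hST ▸ Set.mem_image_of_mem φ hy
    exact ⟨φ y, hφy⟩
  have hface := convexHull_sep_eq_zero_of_nonpos (ℓ := ℓ.toLinearMap) hT hz₀T hz₀
  simp only [ContinuousLinearMap.coe_coe] at hface
  rw [φ.image_convexHull, hST, hface]
  ext x
  refine ⟨fun ⟨hx, hx0⟩ => ⟨hx, fun y hy => ?_⟩, fun ⟨hx, hmax⟩ => ⟨hx, ?_⟩⟩
  · exact (hx0 : ℓ x = 0) ▸ hle y hy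
  · exact le_antisymm (hle x hx) (hz₀ ▸ hmax z₀ (subset_convexHull ℝ T hz₀T))

end ExposedFace

theorem AffineMap.sum_apply {ι k V₁ P₁ V₂ : Type*} [Ring k] [AddCommGroup V₁] [Module k V₁]
    [AddTorsor V₁ P₁] [AddCommGroup V₂] [Module k V₂] (s : Finset ι) (f : ι → P₁ →ᵃ[k] V₂)
    (p : P₁) : (∑ i ∈ s, f i) p = ∑ i ∈ s, f i p :=
  map_sum (⟨⟨fun f => f p, rfl⟩, fun _ _ => rfl⟩ : (P₁ →ᵃ[k] V₂) →+ V₂) f s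

theorem Equiv.Perm.exists_transitive_on_fibers {α β : Type*} [Fintype α] [DecidableEq α]
    [DecidableEq β] (g : α → β) :
    ∃ π : Equiv.Perm α, (∀ a, g (π a) = g a) ∧ ∀ a b, g a = g b → ∃ n : ℕ, (π ^ n) a = b := by
  choose c hc using fun b => Finset.exists_cycleOn {a | g a = b}
  have hg : ∀ a, g (c (g a) a) = g a := by
    intro a
    by_cases h : c (g a) a = a
    · rw [h]
    · simpa using (hc (g a)).2 ((c (g a)).apply_mem_support.2 (Equiv.Perm.mem_support.2 h))
  have hinj : Function.Injective fun a => c (g a) a := by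
    intro a a' h
    have hgg : g a = g a' := by rw [← hg a, ← hg a']; exact congrArg g h
    simp only [hgg] at h
    exact (c (g a')).injective h
  let π := Equiv.ofBijective _ (Finite.injective_iff_bijective.1 hinj)
  have hpow : ∀ n a, (π ^ n) a = (c (g a) ^ n) a := by
    intro n
    induction n with
    | zero => simp
    | succ n ih =>
      intro a
      rw [pow_succ, Equiv.Perm.mul_apply, ih, pow_succ, Equiv.Perm.mul_apply]
      simp [π, hg]
  refine ⟨π, hg, fun a b hab => ?_⟩
  obtain ⟨n, -, hn⟩ := (hc (g a)).1.exists_pow_eq (a := a) (b := b) (by simp) (by simp [hab])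
  exact ⟨n, by rw [hpow, hn]⟩

theorem add_eq_of_sum_sum_eq {β M : Type*} [Fintype β] [DecidableEq β] [AddCommMonoid M]
    {F : β → β → M} {c : M} (hF : ∑ p, ∑ q, F p q = c) {a b a' b' : β}
    (hne : (a, b) ≠ (a', b')) (h : ∀ p q, (p, q) ≠ (a, b) → (p, q) ≠ (a', b') → F p q = 0) :
    F a b + F a' b' = c := by
  rw [← hF, ← Fintype.sum_prod_type']
  exact (Fintype.sum_eq_add (f := fun p : β × β => F p.1 p.2) (a, b) (a', b') hne
    fun ⟨p, q⟩ hpq => h p q hpq.1 hpq.2).symm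

section Assignment

def assignmentSet (ι : Type*) [Fintype ι] : Set (ι × ι × ι → ℝ) :=
  {x | (∀ q, x q = 0 ∨ x q = 1) ∧ (∀ u, ∑ s, ∑ t, x (s, t, u) = 1) ∧
       (∀ t, ∑ s, ∑ u, x (s, t, u) = 1) ∧ (∀ s, ∑ t, ∑ u, x (s, t, u) = 1)}

variable {ι : Type*} [Fintype ι] {x : ι × ι × ι → ℝ}

theorem comp_mem_assignmentSet_iff {κ : Type*} [Fintype κ] (e : ι ≃ κ) {x : κ × κ × κ → ℝ} :
    x ∘ Prod.map e (Prod.map e e) ∈ assignmentSet ι ↔ x ∈ assignmentSet κ := by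
  have hsum (F : κ → κ → ℝ) : ∑ a, ∑ b, F (e a) (e b) = ∑ a, ∑ b, F a b :=
    (Fintype.sum_congr _ _ fun a => e.sum_comp (F (e a))).trans (e.sum_comp fun a => ∑ b, F a b)
  refine and_congr ?_ (and_congr ?_ (and_congr ?_ ?_))
  · exact (e.prodCongr (e.prodCongr e)).forall_congr_right (q := fun q => x q = 0 ∨ x q = 1)
  · exact (forall_congr' fun u => by
      simp only [Function.comp_apply, Prod.map_apply, hsum fun a b => x (a, b, e u)]).trans
      e.forall_congr_right
  · exact (forall_congr' fun t => by
      simp only [Function.comp_apply, Prod.map_apply, hsum fun a b => x (a, e t, b)]).trans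
      e.forall_congr_right
  · exact (forall_congr' fun s => by
      simp only [Function.comp_apply, Prod.map_apply, hsum fun a b => x (e s, a, b)]).trans
      e.forall_congr_right

theorem nonneg_of_mem_assignmentSet (hx : x ∈ assignmentSet ι) (q : ι × ι × ι) : 0 ≤ x q := by
  rcases hx.1 q with h | h <;> simp [h]

theorem add_le_one_of_mem_assignmentSet [DecidableEq ι] (hx : x ∈ assignmentSet ι) (s : ι)
    {t u t' u' : ι} (hne : (t, u) ≠ (t', u')) : x (s, t, u) + x (s, t', u') ≤ 1 := by
  rw [← hx.2.2.2 s, ← Fintype.sum_prod_type']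
  exact add_le_sum (f := fun p : ι × ι => x (s, p.1, p.2))
    (fun _ _ => nonneg_of_mem_assignmentSet hx _) (mem_univ _) (mem_univ _) hne

theorem eq_of_forall_ne_diag [DecidableEq ι] {z : ι × ι × ι → ℝ}
    (hx : ∀ s, ∑ t, ∑ u, x (s, t, u) = 1) (hz : ∀ s, ∑ t, ∑ u, z (s, t, u) = 1)
    (h : ∀ s t u, ¬(t = s ∧ u = s) → x (s, t, u) = z (s, t, u)) : x = z := by
  funext ⟨s, t, u⟩
  by_cases hd : t = s ∧ u = s
  · have hdiag (w : ι × ι × ι → ℝ) (hw : ∑ t, ∑ u, w (s, t, u) = 1) :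
        w (s, s, s) = 1 - ∑ p ∈ univ.erase (s, s), w (s, p.1, p.2) := by
      rw [← hw, ← Fintype.sum_prod_type', ← add_sum_erase _ _ (mem_univ (s, s))]
      ring
    rw [hd.1, hd.2, hdiag x (hx s), hdiag z (hz s)]
    exact congrArg _ (sum_congr rfl fun p hp => h s p.1 p.2 fun hp' => ne_of_mem_erase hp
      (Prod.ext hp'.1 hp'.2))
  · exact h s t u hd

end Assignment

section CrossTensor

variable {α M : Type*} [Fintype α] [DecidableEq α] [AddCommGroup M]

/-- The diagonal entry is what makes every slice `(s, ·, ·)` sum to `c`. -/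
def crossTensor (c : M) (f g : α → α → M) (s t u : α) : M :=
  (if t = s then f s u else 0) + (if u = s then g s t else 0) +
    if t = s ∧ u = s then c - ∑ v, f s v - ∑ v, g s v else 0

variable (c : M) (f g : α → α → M)

theorem sum_sum_crossTensor_fst (s : α) : ∑ t, ∑ u, crossTensor c f g s t u = c := by
  simp [crossTensor, sum_add_distrib, ite_and]

theorem sum_sum_crossTensor_snd (t : α) (hg : ∑ s, g s t = ∑ u, g t u) :
    ∑ s, ∑ u, crossTensor c f g s t u = c := by
  simp [crossTensor, sum_add_distrib, ite_and, hg]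

theorem sum_sum_crossTensor_thd (u : α) (hf : ∑ s, f s u = ∑ v, f u v) :
    ∑ s, ∑ t, crossTensor c f g s t u = c := by
  simp [crossTensor, sum_add_distrib, ite_and, hf]

variable {c f g}

theorem crossTensor_of_ne {s t u : α} (ht : t ≠ s) (hu : u ≠ s) :
    crossTensor c f g s t u = 0 := by
  simp [crossTensor, ht, hu]

theorem crossTensor_self_left {s u : α} (hu : u ≠ s) : crossTensor c f g s s u = f s u := by
  simp [crossTensor, hu]

theorem crossTensor_self_right {s t : α} (ht : t ≠ s) : crossTensor c f g s t s = g s t := by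
  simp [crossTensor, ht]

theorem crossTensor_self_self (s : α) :
    crossTensor c f g s s s = f s s + g s s + (c - ∑ v, f s v - ∑ v, g s v) := by
  simp [crossTensor]

end CrossTensor

namespace SimpleGraph

variable {V : Type*} [Fintype V] (G : SimpleGraph V) [DecidableRel G.Adj]

-- A `Finset` rather than a subtype, so that the `Fintype` instance on `TapNode` does not depend on
-- how `∀ w, ¬ G.Adj v w` gets decided (for `V = Fin k` instance search finds a different route).
def isolatedVerts : Finset V := {v | ∀ w, ¬ G.Adj v w}

abbrev TapNode := G.Dart ⊕ G.edgeSet ⊕ (G.isolatedVerts × Bool)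

theorem card_tapNode :
    Fintype.card G.TapNode = 3 * #G.edgeFinset + 2 * #{v | ∀ w, ¬ G.Adj v w} := by
  rw [Fintype.card_sum, Fintype.card_sum, Fintype.card_prod, Fintype.card_coe, Fintype.card_bool,
    dart_card_eq_twice_card_edges, ← edgeFinset_card, isolatedVerts]
  ring

variable {G}

def Dart.edgeNode (d : G.Dart) : G.TapNode := .inr (.inl ⟨d.edge, d.edge_mem⟩)

theorem exists_edgeNode_eq (e : G.edgeSet) : ∃ d : G.Dart, d.edgeNode = .inr (.inl e) := by
  rcases e with ⟨e, he⟩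
  induction e using Sym2.ind with
  | h a b => exact ⟨⟨(a, b), he⟩, rfl⟩

variable (G) [DecidableEq V]

noncomputable def rotation : Equiv.Perm G.Dart :=
  (Equiv.Perm.exists_transitive_on_fibers fun d : G.Dart => d.fst).choose

@[simp]
theorem rotation_fst (d : G.Dart) : (G.rotation d).fst = d.fst :=
  (Equiv.Perm.exists_transitive_on_fibers fun d : G.Dart => d.fst).choose_spec.1 d

@[simp]
theorem rotation_symm_fst (d : G.Dart) : (G.rotation.symm d).fst = d.fst := by
  simpa using (G.rotation_fst (G.rotation.symm d)).symm

theorem exists_rotation_pow_eq {d d' : G.Dart} (h : d.fst = d'.fst) :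
    ∃ n : ℕ, (G.rotation ^ n) d = d' :=
  (Equiv.Perm.exists_transitive_on_fibers fun d : G.Dart => d.fst).choose_spec.2 d d' h

def incidenceForm : G.TapNode → G.TapNode → (V → ℝ) →ᵃ[ℝ] ℝ
  | .inl d, .inr (.inl e) | .inr (.inl e), .inl d =>
    if d.edge = e then AffineMap.proj d.fst else 0
  | .inr (.inr (v, b)), .inr (.inr (w, b')) => if v = w ∧ b ≠ b' then AffineMap.proj v.1 else 0
  | _, _ => 0

noncomputable def rotationForm : G.TapNode → G.TapNode → (V → ℝ) →ᵃ[ℝ] ℝ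
  | .inl d, .inl d' =>
    if d' = G.rotation d then AffineMap.const ℝ (V → ℝ) 1 - AffineMap.proj d.fst else 0
  | _, _ => 0

noncomputable def tapForm : G.TapNode → G.TapNode → G.TapNode → (V → ℝ) →ᵃ[ℝ] ℝ :=
  crossTensor (AffineMap.const ℝ (V → ℝ) 1) G.incidenceForm G.rotationForm

noncomputable def tapEmbedding : (V → ℝ) →ᵃ[ℝ] (G.TapNode × G.TapNode × G.TapNode → ℝ) :=
  AffineMap.pi fun q => G.tapForm q.1 q.2.1 q.2.2

theorem incidenceForm_comm (s u : G.TapNode) : G.incidenceForm s u = G.incidenceForm u s := by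
  rcases s with d | e | ⟨v, b⟩ <;> rcases u with d' | e' | ⟨w, b'⟩ <;> simp only [incidenceForm]
  by_cases h : v = w
  · subst h
    simp [eq_comm]
  · simp [h, Ne.symm h]

theorem incidenceForm_eq_zero_or (s u : G.TapNode) :
    G.incidenceForm s u = 0 ∨ ∃ i, G.incidenceForm s u = AffineMap.proj i := by
  rcases s with d | e | ⟨v, b⟩ <;> rcases u with d' | e' | ⟨w, b'⟩ <;> simp only [incidenceForm] <;>
    first | exact .inl trivial | (split_ifs; exacts [.inr ⟨_, rfl⟩, .inl rfl])

theorem rotationForm_eq_zero_or (s t : G.TapNode) : G.rotationForm s t = 0 ∨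
    ∃ i, G.rotationForm s t = AffineMap.const ℝ (V → ℝ) 1 - AffineMap.proj i := by
  rcases s with d | e | i <;> rcases t with d' | e' | i' <;> simp only [rotationForm] <;>
    first | exact .inl trivial | (split_ifs; exacts [.inr ⟨_, rfl⟩, .inl rfl])

theorem sum_incidenceForm_dart (d : G.Dart) :
    ∑ u, G.incidenceForm (.inl d) u = AffineMap.proj d.fst := by
  rw [Fintype.sum_sum_type, Fintype.sum_sum_type]
  simp only [incidenceForm, sum_const_zero, zero_add, add_zero]
  rw [Fintype.sum_eq_single ⟨d.edge, d.edge_mem⟩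
    fun e he => if_neg fun h => he (Subtype.ext h.symm), if_pos rfl]

theorem sum_incidenceForm_edgeNode (d : G.Dart) :
    ∑ u, G.incidenceForm d.edgeNode u =
      (AffineMap.proj d.fst : (V → ℝ) →ᵃ[ℝ] ℝ) + AffineMap.proj d.snd := by
  rw [Fintype.sum_sum_type, Fintype.sum_sum_type]
  simp only [Dart.edgeNode, incidenceForm, sum_const_zero, add_zero]
  rw [← sum_filter, d.edge_fiber, sum_pair d.symm_ne.symm]
  rfl

theorem sum_incidenceForm_isolated (v : G.isolatedVerts) (b : Bool) :
    ∑ u, G.incidenceForm (.inr (.inr (v, b))) u = (AffineMap.proj v.1 : (V → ℝ) →ᵃ[ℝ] ℝ) := by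
  rw [Fintype.sum_sum_type, Fintype.sum_sum_type, Fintype.sum_prod_type,
    Fintype.sum_eq_single v fun w hw => by simp [incidenceForm, Ne.symm hw]]
  cases b <;> simp [incidenceForm]

theorem sum_rotationForm_dart (d : G.Dart) :
    ∑ t, G.rotationForm (.inl d) t = AffineMap.const ℝ (V → ℝ) 1 - AffineMap.proj d.fst := by
  simp [Fintype.sum_sum_type, rotationForm]

theorem sum_rotationForm_dart_left (d : G.Dart) :
    ∑ s, G.rotationForm s (.inl d) = AffineMap.const ℝ (V → ℝ) 1 - AffineMap.proj d.fst := by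
  have h (d' : G.Dart) : d = G.rotation d' ↔ d' = G.rotation.symm d := by
    rw [eq_comm, Equiv.eq_symm_apply]
  simp [Fintype.sum_sum_type, rotationForm, h]

theorem sum_rotationForm_left_eq (t : G.TapNode) :
    ∑ s, G.rotationForm s t = ∑ u, G.rotationForm t u := by
  rcases t with d | e | i
  · rw [sum_rotationForm_dart_left, sum_rotationForm_dart]
  all_goals simp [rotationForm]

theorem tapForm_dart_right (d : G.Dart) (t : G.TapNode) :
    G.tapForm (.inl d) t (.inl d) = G.rotationForm (.inl d) t := by
  by_cases ht : t = .inl d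
  · subst ht
    rw [tapForm, crossTensor_self_self, sum_incidenceForm_dart, sum_rotationForm_dart]
    simp [incidenceForm]
  · exact crossTensor_self_right ht

theorem tapForm_dart_rotation (d : G.Dart) :
    G.tapForm (.inl d) (.inl (G.rotation d)) (.inl d) =
      AffineMap.const ℝ (V → ℝ) 1 - AffineMap.proj d.fst := by
  rw [tapForm_dart_right]
  simp [rotationForm]

theorem tapForm_dart_edgeNode (d : G.Dart) :
    G.tapForm (.inl d) (.inl d) d.edgeNode = AffineMap.proj d.fst := by
  rw [tapForm, crossTensor_self_left (by simp [Dart.edgeNode])]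
  simp [incidenceForm, Dart.edgeNode]

theorem tapForm_edgeNode_dart (d : G.Dart) :
    G.tapForm d.edgeNode d.edgeNode (.inl d) = AffineMap.proj d.fst := by
  rw [tapForm, crossTensor_self_left (by simp [Dart.edgeNode])]
  simp [incidenceForm, Dart.edgeNode]

theorem tapForm_edgeNode_self (d : G.Dart) :
    G.tapForm d.edgeNode d.edgeNode d.edgeNode = AffineMap.const ℝ (V → ℝ) 1 -
      ((AffineMap.proj d.fst : (V → ℝ) →ᵃ[ℝ] ℝ) + AffineMap.proj d.snd) := by
  rw [tapForm, crossTensor_self_self, sum_incidenceForm_edgeNode]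
  simp [Dart.edgeNode, incidenceForm, rotationForm]

theorem tapForm_isolated (v : G.isolatedVerts) (b : Bool) :
    G.tapForm (.inr (.inr (v, b))) (.inr (.inr (v, b))) (.inr (.inr (v, !b))) =
      AffineMap.proj v.1 := by
  rw [tapForm, crossTensor_self_left (by simp)]
  simp [incidenceForm]

theorem tapForm_isolated_self (v : G.isolatedVerts) (b : Bool) :
    G.tapForm (.inr (.inr (v, b))) (.inr (.inr (v, b))) (.inr (.inr (v, b))) =
      AffineMap.const ℝ (V → ℝ) 1 - AffineMap.proj v.1 := by
  rw [tapForm, crossTensor_self_self, sum_incidenceForm_isolated]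
  simp [incidenceForm, rotationForm]

theorem cells_of_tapForm_ne_zero {s t u : G.TapNode} (h : G.tapForm s t u ≠ 0) :
    (∃ d, s = .inl d ∧ t = .inl (G.rotation d) ∧ u = .inl d) ∨
    (∃ d, s = .inl d ∧ t = .inl d ∧ u = d.edgeNode) ∨
    (∃ d, s = d.edgeNode ∧ t = d.edgeNode ∧ u = .inl d) ∨
    (∃ e, s = .inr (.inl e) ∧ t = s ∧ u = s) ∨
    (∃ v b, s = .inr (.inr (v, b)) ∧ t = s ∧ (u = s ∨ u = .inr (.inr (v, !b)))) := by
  by_cases ht : t = s <;> by_cases hu : u = s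
  · rw [ht, hu] at h ⊢
    rcases s with d | e | ⟨v, b⟩
    · rw [tapForm_dart_right] at h
      simp only [rotationForm, ne_eq, ite_eq_right_iff, Classical.not_imp] at h
      exact .inl ⟨d, rfl, congrArg _ h.1, rfl⟩
    · exact .inr (.inr (.inr (.inl ⟨e, rfl, rfl, rfl⟩)))
    · exact .inr (.inr (.inr (.inr ⟨v, b, rfl, rfl, .inl rfl⟩)))
  · rw [ht] at h ⊢
    rw [tapForm, crossTensor_self_left hu] at h
    rcases s with d | e | ⟨v, b⟩ <;> rcases u with d' | e' | ⟨w, b'⟩ <;> simp [incidenceForm] at h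
    · obtain rfl : e' = ⟨d.edge, d.edge_mem⟩ := Subtype.ext h.1.symm
      exact .inr (.inl ⟨d, rfl, rfl, rfl⟩)
    · obtain rfl : e = ⟨d'.edge, d'.edge_mem⟩ := Subtype.ext h.1.symm
      exact .inr (.inr (.inl ⟨d', rfl, rfl, rfl⟩))
    · obtain ⟨rfl, hb, -⟩ := h
      exact .inr (.inr (.inr (.inr ⟨v, b, rfl, rfl, .inr (by cases b <;> cases b' <;> simp_all)⟩)))
  · rw [hu] at h ⊢
    rw [tapForm, crossTensor_self_right ht] at h
    rcases s with d | e | ⟨v, b⟩ <;> rcases t with d' | e' | ⟨w, b'⟩ <;> simp [rotationForm] at h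
    exact .inl ⟨d, rfl, by rw [h.1], rfl⟩
  · exact absurd (crossTensor_of_ne ht hu) h

variable {G} {y : V → ℝ}

theorem tapForm_apply_eq_zero_or_one (hy : ∀ i, y i = 0 ∨ y i = 1)
    (hG : ∀ i j, G.Adj i j → y i + y j ≤ 1) (s t u : G.TapNode) :
    G.tapForm s t u y = 0 ∨ G.tapForm s t u y = 1 := by
  have hf (s u : G.TapNode) : G.incidenceForm s u y = 0 ∨ G.incidenceForm s u y = 1 := by
    rcases G.incidenceForm_eq_zero_or s u with h | ⟨i, h⟩ <;> simp [h, hy]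
  have hg (s t : G.TapNode) : G.rotationForm s t y = 0 ∨ G.rotationForm s t y = 1 := by
    rcases G.rotationForm_eq_zero_or s t with h | ⟨i, h⟩ <;> simp only [h]
    · simp
    · rcases hy i with h | h <;> simp [h]
  by_cases ht : t = s <;> by_cases hu : u = s
  · rw [ht, hu]
    rcases s with d | e | ⟨v, b⟩
    · rw [tapForm_dart_right]
      exact hg _ _
    · obtain ⟨d, hd⟩ := G.exists_edgeNode_eq e
      have hd' := hG _ _ d.adj
      rw [← hd, tapForm_edgeNode_self]
      rcases hy d.fst with h | h <;> rcases hy d.snd with h' | h' <;> simp [h, h'] at hd' ⊢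
      linarith
    · rw [tapForm_isolated_self]
      rcases hy v with h | h <;> simp [h]
  · rw [ht, tapForm, crossTensor_self_left hu]
    exact hf _ _
  · rw [hu, tapForm, crossTensor_self_right ht]
    exact hg _ _
  · simp [tapForm, crossTensor_of_ne ht hu]

theorem tapEmbedding_mem_assignmentSet (hy : ∀ i, y i = 0 ∨ y i = 1)
    (hG : ∀ i j, G.Adj i j → y i + y j ≤ 1) : G.tapEmbedding y ∈ assignmentSet G.TapNode := by
  have hsum (F : G.TapNode → G.TapNode → (V → ℝ) →ᵃ[ℝ] ℝ)
      (hF : ∑ a, ∑ b, F a b = AffineMap.const ℝ (V → ℝ) 1) : ∑ a, ∑ b, F a b y = 1 := by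
    simpa [AffineMap.sum_apply] using congrArg (· y) hF
  exact ⟨fun q => tapForm_apply_eq_zero_or_one hy hG _ _ _,
    fun u => hsum _ (sum_sum_crossTensor_thd _ _ _ u
      (Fintype.sum_congr _ _ fun s => G.incidenceForm_comm s u)),
    fun t => hsum _ (sum_sum_crossTensor_snd _ _ _ t (G.sum_rotationForm_left_eq t)),
    fun s => hsum _ (sum_sum_crossTensor_fst _ _ _ s)⟩

variable (G) in
noncomputable def coordCell (v : V) : G.TapNode × G.TapNode × G.TapNode :=
  if h : ∃ d : G.Dart, d.fst = v then (h.choose.edgeNode, h.choose.edgeNode, .inl h.choose)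
  else
    let i : G.isolatedVerts := ⟨v, mem_filter.2 ⟨mem_univ v, fun w hw => h ⟨⟨(v, w), hw⟩, rfl⟩⟩⟩
    (.inr (.inr (i, true)), .inr (.inr (i, true)), .inr (.inr (i, false)))

theorem tapEmbedding_apply_coordCell (y : V → ℝ) (v : V) :
    G.tapEmbedding y (G.coordCell v) = y v := by
  simp only [tapEmbedding, AffineMap.pi_apply, coordCell]
  split_ifs with h
  · rw [tapForm_edgeNode_dart, h.choose_spec]
    rfl
  · show G.tapForm _ _ (.inr (.inr (_, !true))) y = y v
    rw [tapForm_isolated]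
    rfl

variable (G) in
theorem tapEmbedding_injective : Function.Injective G.tapEmbedding := fun y y' h =>
  funext fun v => by simpa [tapEmbedding_apply_coordCell] using congrFun h (G.coordCell v)

variable {x : G.TapNode × G.TapNode × G.TapNode → ℝ}

theorem sum_fst_dart (hx : x ∈ assignmentSet G.TapNode)
    (hdead : ∀ s t u, G.tapForm s t u = 0 → x (s, t, u) = 0) (d : G.Dart) :
    x (.inl d, .inl d, d.edgeNode) + x (.inl d, .inl (G.rotation d), .inl d) = 1 := by
  refine add_eq_of_sum_sum_eq (hx.2.2.2 (.inl d)) (by simp [Dart.edgeNode]) fun t u h₁ h₂ => ?_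
  refine hdead _ _ _ (not_imp_comm.1 G.cells_of_tapForm_ne_zero ?_)
  clear hx hdead
  rintro (⟨d', hs, rfl, rfl⟩ | ⟨d', hs, rfl, rfl⟩ | ⟨d', hs, rfl, rfl⟩ | ⟨e, hs, rfl, rfl⟩ |
    ⟨v, b, hs, rfl, rfl | rfl⟩) <;> simp_all [Dart.edgeNode]

theorem sum_thd_dart (hx : x ∈ assignmentSet G.TapNode)
    (hdead : ∀ s t u, G.tapForm s t u = 0 → x (s, t, u) = 0) (d : G.Dart) :
    x (d.edgeNode, d.edgeNode, .inl d) + x (.inl d, .inl (G.rotation d), .inl d) = 1 := by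
  refine add_eq_of_sum_sum_eq (hx.2.1 (.inl d)) (by simp [Dart.edgeNode]) fun s t h₁ h₂ => ?_
  refine hdead _ _ _ (not_imp_comm.1 G.cells_of_tapForm_ne_zero ?_)
  clear hx hdead
  rintro (⟨d', rfl, rfl, hu⟩ | ⟨d', rfl, rfl, hu⟩ | ⟨d', rfl, rfl, hu⟩ | ⟨e, rfl, rfl, hu⟩ |
    ⟨v, b, rfl, rfl, hu | hu⟩) <;> simp_all [Dart.edgeNode]

theorem sum_snd_rotation (hx : x ∈ assignmentSet G.TapNode)
    (hdead : ∀ s t u, G.tapForm s t u = 0 → x (s, t, u) = 0) (d : G.Dart) :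
    x (.inl (G.rotation d), .inl (G.rotation d), (G.rotation d).edgeNode) +
      x (.inl d, .inl (G.rotation d), .inl d) = 1 := by
  refine add_eq_of_sum_sum_eq (hx.2.2.1 (.inl (G.rotation d))) (by simp [Dart.edgeNode])
    fun s u h₁ h₂ => ?_
  refine hdead _ _ _ (not_imp_comm.1 G.cells_of_tapForm_ne_zero ?_)
  clear hx hdead
  rintro (⟨d', rfl, ht, rfl⟩ | ⟨d', rfl, ht, rfl⟩ | ⟨d', rfl, ht, rfl⟩ | ⟨e, rfl, ht, rfl⟩ |
    ⟨v, b, rfl, ht, rfl | rfl⟩) <;> simp_all [Dart.edgeNode]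

theorem sum_fst_isolated (hx : x ∈ assignmentSet G.TapNode)
    (hdead : ∀ s t u, G.tapForm s t u = 0 → x (s, t, u) = 0) (v : G.isolatedVerts) (b : Bool) :
    x (.inr (.inr (v, b)), .inr (.inr (v, b)), .inr (.inr (v, b))) +
      x (.inr (.inr (v, b)), .inr (.inr (v, b)), .inr (.inr (v, !b))) = 1 := by
  refine add_eq_of_sum_sum_eq (hx.2.2.2 (.inr (.inr (v, b)))) (by simp) fun t u h₁ h₂ => ?_
  refine hdead _ _ _ (not_imp_comm.1 G.cells_of_tapForm_ne_zero ?_)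
  clear hx hdead
  rintro (⟨d', hs, rfl, rfl⟩ | ⟨d', hs, rfl, rfl⟩ | ⟨d', hs, rfl, rfl⟩ | ⟨e, hs, rfl, rfl⟩ |
    ⟨w, c, hs, rfl, rfl | rfl⟩) <;> simp_all [Dart.edgeNode]

theorem sum_thd_isolated (hx : x ∈ assignmentSet G.TapNode)
    (hdead : ∀ s t u, G.tapForm s t u = 0 → x (s, t, u) = 0) (v : G.isolatedVerts) (b : Bool) :
    x (.inr (.inr (v, b)), .inr (.inr (v, b)), .inr (.inr (v, b))) +
      x (.inr (.inr (v, !b)), .inr (.inr (v, !b)), .inr (.inr (v, b))) = 1 := by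
  refine add_eq_of_sum_sum_eq (hx.2.1 (.inr (.inr (v, b)))) (by simp) fun s t h₁ h₂ => ?_
  refine hdead _ _ _ (not_imp_comm.1 G.cells_of_tapForm_ne_zero ?_)
  clear hx hdead
  rintro (⟨d', rfl, rfl, hu⟩ | ⟨d', rfl, rfl, hu⟩ | ⟨d', rfl, rfl, hu⟩ | ⟨e, rfl, rfl, hu⟩ |
    ⟨w, c, rfl, rfl, hu | hu⟩) <;> simp_all [Dart.edgeNode]

theorem apply_rotation_eq_of_fst_eq (hx : x ∈ assignmentSet G.TapNode)
    (hdead : ∀ s t u, G.tapForm s t u = 0 → x (s, t, u) = 0) {d d' : G.Dart}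
    (h : d.fst = d'.fst) :
    x (.inl d', .inl (G.rotation d'), .inl d') = x (.inl d, .inl (G.rotation d), .inl d) := by
  obtain ⟨n, rfl⟩ := G.exists_rotation_pow_eq h
  clear h
  induction n with
  | zero => rfl
  | succ n ih =>
    rw [← ih, pow_succ', Equiv.Perm.mul_apply]
    linarith [sum_fst_dart hx hdead (G.rotation ((G.rotation ^ n) d)),
      sum_snd_rotation hx hdead ((G.rotation ^ n) d)]

theorem apply_coordCell_fst (hx : x ∈ assignmentSet G.TapNode)
    (hdead : ∀ s t u, G.tapForm s t u = 0 → x (s, t, u) = 0) (d : G.Dart) :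
    x (G.coordCell d.fst) = x (d.edgeNode, d.edgeNode, .inl d) := by
  have h : ∃ d' : G.Dart, d'.fst = d.fst := ⟨d, rfl⟩
  rw [coordCell, dif_pos h]
  linarith [apply_rotation_eq_of_fst_eq hx hdead h.choose_spec,
    sum_thd_dart hx hdead h.choose, sum_thd_dart hx hdead d]

theorem apply_coordCell_isolated (v : G.isolatedVerts) :
    x (G.coordCell v.1) =
      x (.inr (.inr (v, true)), .inr (.inr (v, true)), .inr (.inr (v, false))) := by
  have h : ¬∃ d : G.Dart, d.fst = v.1 := fun ⟨d, hd⟩ => (mem_filter.1 v.2).2 d.snd (hd ▸ d.adj)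
  rw [coordCell, dif_neg h]

theorem apply_coordCell_add_le_one (hx : x ∈ assignmentSet G.TapNode)
    (hdead : ∀ s t u, G.tapForm s t u = 0 → x (s, t, u) = 0) {i j : V} (hij : G.Adj i j) :
    x (G.coordCell i) + x (G.coordCell j) ≤ 1 := by
  let d : G.Dart := ⟨(i, j), hij⟩
  have hj := apply_coordCell_fst hx hdead d.symm
  rw [show d.symm.edgeNode = d.edgeNode by simp [Dart.edgeNode]] at hj
  rw [show i = d.fst from rfl, show j = d.symm.fst from rfl, apply_coordCell_fst hx hdead d, hj]
  exact add_le_one_of_mem_assignmentSet hx _ (by simp [d.symm_ne.symm])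

theorem tapForm_apply_coordCell (hx : x ∈ assignmentSet G.TapNode)
    (hdead : ∀ s t u, G.tapForm s t u = 0 → x (s, t, u) = 0) {s t u : G.TapNode}
    (hoff : ¬(t = s ∧ u = s)) : G.tapForm s t u (fun v => x (G.coordCell v)) = x (s, t, u) := by
  by_cases hT : G.tapForm s t u = 0
  · rw [hT, hdead _ _ _ hT]
    rfl
  rcases G.cells_of_tapForm_ne_zero hT with ⟨d, rfl, rfl, rfl⟩ | ⟨d, rfl, rfl, rfl⟩ |
    ⟨d, rfl, rfl, rfl⟩ | ⟨e, rfl, rfl, rfl⟩ | ⟨v, b, rfl, rfl, rfl | rfl⟩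
  · rw [tapForm_dart_rotation]
    simp [apply_coordCell_fst hx hdead]
    linarith [sum_thd_dart hx hdead d]
  · rw [tapForm_dart_edgeNode]
    simp [apply_coordCell_fst hx hdead]
    linarith [sum_thd_dart hx hdead d, sum_fst_dart hx hdead d]
  · rw [tapForm_edgeNode_dart]
    simp [apply_coordCell_fst hx hdead]
  · exact absurd ⟨rfl, rfl⟩ hoff
  · exact absurd ⟨rfl, rfl⟩ hoff
  · rw [tapForm_isolated]
    cases b <;> simp only [AffineMap.proj_apply, apply_coordCell_isolated, Bool.not_false,
      Bool.not_true]
    have h₁ := sum_fst_isolated hx hdead v true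
    have h₂ := sum_thd_isolated hx hdead v true
    simp only [Bool.not_true] at h₁ h₂
    linarith

theorem exists_tapEmbedding_eq (hx : x ∈ assignmentSet G.TapNode)
    (hdead : ∀ s t u, G.tapForm s t u = 0 → x (s, t, u) = 0) :
    ∃ y : V → ℝ, (∀ i, y i = 0 ∨ y i = 1) ∧ (∀ i j, G.Adj i j → y i + y j ≤ 1) ∧
      G.tapEmbedding y = x := by
  have hy : ∀ i, x (G.coordCell i) = 0 ∨ x (G.coordCell i) = 1 := fun i => hx.1 _
  have hG := fun i j (hij : G.Adj i j) => apply_coordCell_add_le_one hx hdead hij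
  exact ⟨_, hy, hG, eq_of_forall_ne_diag (tapEmbedding_mem_assignmentSet hy hG).2.2.2 hx.2.2.2
    fun _ _ _ hoff => tapForm_apply_coordCell hx hdead hoff⟩

open scoped Classical in
variable (G) in
noncomputable def deadMass : (G.TapNode × G.TapNode × G.TapNode → ℝ) →ₗ[ℝ] ℝ :=
  ∑ q ∈ univ.filter fun q => G.tapForm q.1 q.2.1 q.2.2 = 0, LinearMap.proj q

open scoped Classical in
theorem deadMass_apply :
    G.deadMass x = ∑ q ∈ univ.filter fun q => G.tapForm q.1 q.2.1 q.2.2 = 0, x q := by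
  simp [deadMass]

theorem deadMass_nonneg (hx : x ∈ assignmentSet G.TapNode) : 0 ≤ G.deadMass x := by
  rw [deadMass_apply]
  exact sum_nonneg fun q _ => nonneg_of_mem_assignmentSet hx q

theorem deadMass_tapEmbedding (y : V → ℝ) : G.deadMass (G.tapEmbedding y) = 0 := by
  rw [deadMass_apply]
  exact sum_eq_zero fun q hq => by simp_all [tapEmbedding]

theorem apply_eq_zero_of_deadMass_eq_zero (hx : x ∈ assignmentSet G.TapNode)
    (h : G.deadMass x = 0) (s t u : G.TapNode) (hT : G.tapForm s t u = 0) : x (s, t, u) = 0 := by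
  rw [deadMass_apply] at h
  exact (sum_eq_zero_iff_of_nonneg fun q _ => nonneg_of_mem_assignmentSet hx q).1 h (s, t, u)
    (by simp [hT])

end SimpleGraph

/-- For every graph `G` on `k` vertices, with `E` its edge set and `W` its set of
isolated vertices, and `m = 3|E| + 2|W|`, the polytope `conv(SSP(G))` is affinely
equivalent to an exposed face of `conv(TAP_m)`. -/
theorem stmt9 (k : ℕ) (G : SimpleGraph (Fin k)) [DecidableRel G.Adj] :
    ∀ m : ℕ,
      m = 3 * G.edgeFinset.card +
          2 * (Finset.univ.filter (fun v : Fin k => ∀ w, ¬ G.Adj v w)).card →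
      ∃ F : Set (Fin m × Fin m × Fin m → ℝ),
        IsExposed ℝ (convexHull ℝ (TAP m)) F ∧
        ∃ φ : (Fin k → ℝ) →ᵃ[ℝ] (Fin m × Fin m × Fin m → ℝ),
          Function.Injective φ ∧ φ '' (convexHull ℝ (SSP G)) = F := by
  intro m hm
  let e : Fin m ≃ G.TapNode :=
    (Fintype.equivFinOfCardEq (by rw [hm]; convert G.card_tapNode)).symm
  let R := LinearEquiv.funCongrLeft ℝ ℝ (e.prodCongr (e.prodCongr e))
  have hR (z) : z ∈ TAP m ↔ R.symm z ∈ assignmentSet G.TapNode := by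
    have h := comp_mem_assignmentSet_iff e (x := R.symm z)
    rwa [show R.symm z ∘ Prod.map e (Prod.map e e) = z from R.apply_symm_apply z] at h
  let φ := R.toLinearMap.toAffineMap.comp G.tapEmbedding
  let ℓ : StrongDual ℝ (Fin m × Fin m × Fin m → ℝ) :=
    LinearMap.toContinuousLinearMap (-(G.deadMass ∘ₗ R.symm.toLinearMap))
  have hℓ (z) : ℓ z = -G.deadMass (R.symm z) := rfl
  refine ⟨_, isExposed_image_convexHull (S := SSP G) φ ℓ ⟨0, fun _ => .inl rfl, by simp⟩
    (fun z hz => ?_) ?_, φ, R.injective.comp G.tapEmbedding_injective, rfl⟩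
  · rw [hℓ, neg_nonpos]
    exact G.deadMass_nonneg ((hR z).1 hz)
  ext z
  refine ⟨?_, fun ⟨hz, hz₀⟩ => ?_⟩
  · rintro ⟨y, hy, rfl⟩
    refine ⟨(hR _).2 ?_, by simp [hℓ, φ, G.deadMass_tapEmbedding]⟩
    simpa [φ] using G.tapEmbedding_mem_assignmentSet hy.1 hy.2
  · obtain ⟨y, hy, hG, hyz⟩ := G.exists_tapEmbedding_eq ((hR z).1 hz)
      (G.apply_eq_zero_of_deadMass_eq_zero ((hR z).1 hz) (by simpa [hℓ] using hz₀))
    exact ⟨y, ⟨hy, hG⟩, by simp [φ, hyz]⟩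
end

section
/- For every p ≥ 3 and every m ∈ ℕ, the set F = conv(PAP^p_m) ∩ {x : x_{i_1,…,i_p} = 0 for every tuple with i_p ≠ i_{p-1}} is an exposed face of the p-index assignment polytope conv(PAP^p_m), and F is affinely equivalent to the (p−1)-index assignment polytope conv(PAP^{p−1}_m): there is an injective affine map φ from ℝ^{(Fin m)^{p−1} → ℝ} with φ(conv(PAP^{p−1}_m)) = F. -/
/-!
Every vertex of the assignment polytope is nonnegative, so the total mass on the tuples with
`i_p ≠ i_{p-1}` is a linear functional that is nonnegative on the polytope; `F` is the face on
which it vanishes, hence exposed, and, being cut out by coordinates that are nonnegative at every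
vertex, it is the convex hull of the vertices it contains. Let `σ : Fin p → Fin (p-1)` merge the
last two axes. Extending a function on `(p-1)`-tuples by zero along the injection `s ↦ s ∘ σ` is
linear and maps `PAP^{p-1}_m` onto exactly those vertices, because axis `r` of a pulled-back
tuple is axis `σ r` of the original one.
-/

/-- The vertex set of the `p`-index assignment polytope: 0/1 vectors
`x : (Fin m)^p → ℝ` such that, for each axis `r` and value `v`, the sum of `x`
over all tuples whose `r`-th entry is `v` equals 1. -/
def PAP (p m : ℕ) : Set ((Fin p → Fin m) → ℝ) :=
  {x | (∀ t, x t = 0 ∨ x t = 1) ∧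
       ∀ (r : Fin p) (v : Fin m),
         ∑ t ∈ Finset.univ.filter (fun t : Fin p → Fin m => t r = v), x t = 1}

open Function Finset Set

section NonnegOrthant

variable {ι : Type*}

theorem isExposed_zeroLocus_of_nonneg {E : Type*} [AddCommGroup E] [Module ℝ E]
    [TopologicalSpace E] {C : Set E} (l : StrongDual ℝ E) (hl : ∀ x ∈ C, 0 ≤ l x) :
    IsExposed ℝ C {x ∈ C | l x = 0} := by
  rintro ⟨x₀, hx₀C, hx₀⟩
  refine ⟨-l, Set.ext fun x => ⟨fun ⟨hxC, hx⟩ => ⟨hxC, fun y hy => ?_⟩,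
    fun ⟨hxC, hmax⟩ => ⟨hxC, ?_⟩⟩⟩
  · simp [hx, hl y hy]
  · have := hmax x₀ hx₀C
    simp only [neg_apply, hx₀, neg_zero] at this
    linarith [hl x hxC]

theorem convex_zeroSet (P : ι → Prop) : Convex ℝ {x : ι → ℝ | ∀ i, P i → x i = 0} :=
  fun x hx y hy a b _ _ _ i hi => by simp [hx i hi, hy i hi]

theorem convexHull_inter_zeroSet {V : Set (ι → ℝ)} (hV : V ⊆ Ici 0) (P : ι → Prop) :
    convexHull ℝ V ∩ {x | ∀ i, P i → x i = 0} =
      convexHull ℝ (V ∩ {x | ∀ i, P i → x i = 0}) := by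
  classical
  refine subset_antisymm ?_ (subset_inter (convexHull_mono inter_subset_left)
    (convexHull_min inter_subset_right (convex_zeroSet P)))
  rintro x ⟨hx, hxZ⟩
  rw [_root_.convexHull_eq] at hx
  obtain ⟨κ, s, w, z, hw₀, hw₁, hz, rfl⟩ := hx
  have hzZ : ∀ j ∈ s, w j ≠ 0 → ∀ i, P i → z j i = 0 := by
    intro j hj hwj i hi
    have hsum : ∑ k ∈ s, w k * z k i = 0 := by
      simpa [centerMass, hw₁, Finset.sum_apply] using hxZ i hi
    have := (sum_eq_zero_iff_of_nonneg fun k hk => mul_nonneg (hw₀ k hk) (hV (hz k hk) i)).1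
      hsum j hj
    exact (mul_eq_zero.1 this).resolve_left hwj
  rw [← centerMass_filter_ne_zero]
  refine centerMass_mem_convexHull _ (fun j hj => hw₀ j (mem_filter.1 hj).1) ?_ ?_
  · rw [sum_filter_ne_zero, hw₁]
    exact one_pos
  · intro j hj
    obtain ⟨hjs, hwj⟩ := mem_filter.1 hj
    exact ⟨hz j hjs, hzZ j hjs hwj⟩

variable [Fintype ι]

theorem sum_filter_eq_zero_iff_of_nonneg {x : ι → ℝ} (hx : 0 ≤ x) (P : ι → Prop)
    [DecidablePred P] : ∑ i ∈ univ.filter P, x i = 0 ↔ ∀ i, P i → x i = 0 := by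
  rw [sum_eq_zero_iff_of_nonneg fun i _ => hx i]
  simp

theorem isExposed_inter_zeroSet {C : Set (ι → ℝ)} (hC : C ⊆ Ici 0) (P : ι → Prop) :
    IsExposed ℝ C (C ∩ {x | ∀ i, P i → x i = 0}) := by
  classical
  let l : StrongDual ℝ (ι → ℝ) := ∑ i ∈ univ.filter P, ContinuousLinearMap.proj i
  have hl : ∀ x, l x = ∑ i ∈ univ.filter P, x i := fun x => by simp [l]
  have hZ : C ∩ {x | ∀ i, P i → x i = 0} = {x ∈ C | l x = 0} := by
    ext x
    refine and_congr_right fun hxC => ?_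
    rw [hl, sum_filter_eq_zero_iff_of_nonneg (hC hxC)]
    rfl
  rw [hZ]
  exact isExposed_zeroLocus_of_nonneg l fun x hx => (hl x).symm ▸ sum_nonneg fun i _ => hC hx i

end NonnegOrthant

section ExtendByZero

variable {α β : Type*} {f : α → β}

theorem extend_comp_eq_self_of_eq_zero (hf : Injective f) {x : β → ℝ}
    (hx : ∀ b ∉ range f, x b = 0) : extend f (x ∘ f) 0 = x := by
  funext b
  by_cases hb : b ∈ range f
  · obtain ⟨a, rfl⟩ := hb
    exact hf.extend_apply _ _ a
  · rw [extend_apply' _ _ _ hb, hx b hb, Pi.zero_apply]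

theorem sum_filter_extend_zero [Fintype α] [Fintype β] (hf : Injective f) (g : α → ℝ)
    (P : β → Prop) [DecidablePred P] :
    ∑ b ∈ univ.filter P, extend f g 0 b = ∑ a ∈ univ.filter fun a => P (f a), g a := by
  rw [sum_filter, sum_filter]
  refine (Fintype.sum_of_injective f hf _ _ (fun b hb => ?_) fun a => ?_).symm
  · rw [extend_apply' _ _ _ hb, Pi.zero_apply, ite_self]
  · rw [hf.extend_apply]

end ExtendByZero

section Pullback

variable {p q m : ℕ} {σ : Fin p → Fin q}

theorem extend_mem_PAP (hσ : Surjective σ) {y : (Fin q → Fin m) → ℝ} (hy : y ∈ PAP q m) :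
    extend (· ∘ σ) y 0 ∈ PAP p m := by
  refine ⟨fun t => ?_, fun r v => ?_⟩
  · by_cases ht : t ∈ range (· ∘ σ)
    · obtain ⟨s, rfl⟩ := ht
      rw [hσ.injective_comp_right.extend_apply]
      exact hy.1 s
    · rw [extend_apply' _ _ _ ht]
      exact Or.inl rfl
  · rw [sum_filter_extend_zero hσ.injective_comp_right]
    exact hy.2 (σ r) v

theorem comp_mem_PAP (hσ : Surjective σ) {x : (Fin p → Fin m) → ℝ} (hx : x ∈ PAP p m)
    (hx₀ : ∀ t ∉ range (· ∘ σ), x t = 0) : (fun s => x (s ∘ σ)) ∈ PAP q m := by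
  refine ⟨fun s => hx.1 (s ∘ σ), fun r' v => ?_⟩
  obtain ⟨r, rfl⟩ := hσ r'
  have := hx.2 r v
  rwa [← extend_comp_eq_self_of_eq_zero hσ.injective_comp_right hx₀,
    sum_filter_extend_zero hσ.injective_comp_right] at this

theorem image_extendByZero_PAP (hσ : Surjective σ) :
    ExtendByZero.linearMap ℝ (· ∘ σ) '' PAP q m =
      PAP p m ∩ {x | ∀ t, t ∉ range (· ∘ σ) → x t = 0} := by
  ext x
  constructor
  · rintro ⟨y, hy, rfl⟩
    exact ⟨extend_mem_PAP hσ hy, fun t ht => by simp [extend_apply' _ _ _ ht]⟩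
  · rintro ⟨hx, hx₀⟩
    exact ⟨_, comp_mem_PAP hσ hx hx₀, extend_comp_eq_self_of_eq_zero hσ.injective_comp_right hx₀⟩

end Pullback

section MergeLastTwo

variable {p : ℕ}

def mergeLastTwo (hp : 2 ≤ p) (i : Fin p) : Fin (p - 1) := ⟨min i (p - 2), by omega⟩

theorem mergeLastTwo_castLE (hp : 2 ≤ p) (j : Fin (p - 1)) :
    mergeLastTwo hp (Fin.castLE (Nat.sub_le p 1) j) = j := by
  ext
  simp only [mergeLastTwo, Fin.val_castLE]
  omega

theorem mergeLastTwo_surjective (hp : 2 ≤ p) : Surjective (mergeLastTwo hp) :=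
  fun j => ⟨_, mergeLastTwo_castLE hp j⟩

theorem mem_range_comp_mergeLastTwo {m : ℕ} (hp : 2 ≤ p) (t : Fin p → Fin m) :
    t ∈ range (· ∘ mergeLastTwo hp) ↔ t ⟨p - 1, by omega⟩ = t ⟨p - 2, by omega⟩ := by
  constructor
  · rintro ⟨s, rfl⟩
    exact congrArg s (Fin.ext (by simp [mergeLastTwo]; omega))
  · intro ht
    refine ⟨t ∘ Fin.castLE (Nat.sub_le p 1), funext fun i => ?_⟩
    by_cases hi : i.val < p - 1
    · exact congrArg t (Fin.ext (by simp [mergeLastTwo]; omega))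
    · rw [show i = ⟨p - 1, by omega⟩ from Fin.ext (by simp only; omega), ht]
      exact congrArg t (Fin.ext (by simp [mergeLastTwo]; omega))

end MergeLastTwo

theorem PAP_subset_Ici (p m : ℕ) : PAP p m ⊆ Ici 0 :=
  fun _ hx t => (hx.1 t).elim ge_of_eq fun h => h ▸ zero_le_one

/-- For `p ≥ 3`, the set `F` of points of `conv(PAP^p_m)` vanishing on all tuples
whose `p`-th entry differs from the `(p−1)`-st is an exposed face of
`conv(PAP^p_m)`, affinely equivalent to `conv(PAP^{p−1}_m)`. -/
theorem stmt11 (p m : ℕ) (hp : 3 ≤ p) :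
    IsExposed ℝ (convexHull ℝ (PAP p m))
      (convexHull ℝ (PAP p m) ∩
        {x | ∀ t : Fin p → Fin m,
          t ⟨p - 1, by omega⟩ ≠ t ⟨p - 2, by omega⟩ → x t = 0}) ∧
    ∃ φ : ((Fin (p - 1) → Fin m) → ℝ) →ᵃ[ℝ] ((Fin p → Fin m) → ℝ),
      Function.Injective φ ∧
      φ '' (convexHull ℝ (PAP (p - 1) m)) =
        convexHull ℝ (PAP p m) ∩
          {x | ∀ t : Fin p → Fin m,
            t ⟨p - 1, by omega⟩ ≠ t ⟨p - 2, by omega⟩ → x t = 0} := by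
  have hp₂ : 2 ≤ p := by omega
  have hσ := mergeLastTwo_surjective hp₂
  have hZ : {x : (Fin p → Fin m) → ℝ | ∀ t, t ⟨p - 1, by omega⟩ ≠ t ⟨p - 2, by omega⟩ → x t = 0} =
      {x | ∀ t, t ∉ range (· ∘ mergeLastTwo hp₂) → x t = 0} := by
    simp_rw [mem_range_comp_mergeLastTwo]
  refine ⟨isExposed_inter_zeroSet (convexHull_min (PAP_subset_Ici p m) (convex_Ici 0)) _,
    (ExtendByZero.linearMap ℝ (· ∘ mergeLastTwo hp₂)).toAffineMap,
    extend_injective hσ.injective_comp_right (0 : (Fin p → Fin m) → ℝ), ?_⟩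
  rw [LinearMap.coe_toAffineMap, LinearMap.image_convexHull, image_extendByZero_PAP hσ, hZ,
    convexHull_inter_zeroSet (PAP_subset_Ici p m)]
end

section
/- For every p ≥ 3, every k ≥ 2, and every simple graph G on k vertices, setting m = 2k(k−1), the stable set polytope conv(SSP(G)) is affinely equivalent to an exposed face of the p-index assignment polytope conv(PAP^p_m). -/
/-!
Replicating the last axis and relabelling values turns a face of the 3-index assignment polytope
into a face of the `p`-index one with the same vertices, so it suffices to work with three axes,
where a vertex is a pair of permutations `σ, τ` (the entries `(v, σ v, τ v)` equal to `1`).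

The values `v` are indexed by an owner `i`, a partner `j ≠ i` and a kind bit. Each value has two
or three admissible cells `(v, σ v, τ v)`: `σ v` is `v` or the rotation `rot v` inside the block of
values owned by `i`, so injectivity forces one choice per vertex, which is the coordinate `y i`.
For an edge `ij` the edge value `(i, j, 0)` and the value `(j, i, 1)` are swapped by `τ` or both
fixed, and this link makes `y i = y j = 1` impossible. Placing the weights `y i`,
`1 - y i - y j` and `y j` on the three cells of an edge value (and `y i`, `1 - y i` on the two cells
of the other values) is an affine injection whose image of the stable sets is exactly the set of
vertices supported on these cells. That set is an exposed face of a `0/1` polytope, exposed by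
minus the sum of the coordinates off the support, and such a face is the hull of its vertices.
-/
open Finset Function

section Assignment

variable {ι α : Type*} [Fintype ι] [DecidableEq ι] [Fintype α] [DecidableEq α]

variable (ι α) in
def assignmentVertices : Set ((ι → α) → ℝ) :=
  {x | (∀ t, x t = 0 ∨ x t = 1) ∧ ∀ (r : ι) (a : α), ∑ t with t r = a, x t = 1}

theorem PAP_eq_assignmentVertices (p m : ℕ) : PAP p m = assignmentVertices (Fin p) (Fin m) :=
  rfl

namespace assignmentVertices

variable {x x' : (ι → α) → ℝ}

theorem nonneg (hx : x ∈ assignmentVertices ι α) : 0 ≤ x := fun t => by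
  rcases hx.1 t with h | h <;> simp [h]

theorem convexHull_nonneg (hx : x ∈ convexHull ℝ (assignmentVertices ι α)) : 0 ≤ x :=
  convexHull_min (fun _ => nonneg) (convex_Ici 0) hx

theorem finite : (assignmentVertices ι α).Finite :=
  (Set.Finite.pi fun _ => Set.toFinite {(0 : ℝ), 1}).subset fun x hx t _ => by
    rcases hx.1 t with h | h <;> simp [h]

theorem exists_apply_eq_one (hx : x ∈ assignmentVertices ι α) (r : ι) (a : α) :
    ∃ t, t r = a ∧ x t = 1 := by
  obtain ⟨t, ht, hne⟩ := exists_ne_zero_of_sum_ne_zero (hx.2 r a ▸ one_ne_zero)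
  exact ⟨t, (mem_filter.1 ht).2, (hx.1 t).resolve_left hne⟩

theorem eq_of_apply_eq_one (hx : x ∈ assignmentVertices ι α) {t t' : ι → α} (ht : x t = 1)
    (ht' : x t' = 1) {r : ι} (hr : t r = t' r) : t = t' := by
  by_contra hne
  have : ∑ s ∈ {t, t'}, x s ≤ ∑ s with s r = t r, x s :=
    sum_le_sum_of_subset_of_nonneg (by simp [insert_subset_iff, hr]) fun s _ _ => nonneg hx s
  rw [sum_pair hne, ht, ht'] at this
  linarith [hx.2 r (t r)]

theorem eq_of_forall_apply_eq_one [Nonempty ι] (hx : x ∈ assignmentVertices ι α)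
    (hx' : x' ∈ assignmentVertices ι α) (h : ∀ t, x t = 1 → x' t = 1) : x = x' := by
  funext t
  obtain ⟨r⟩ := ‹Nonempty ι›
  rcases hx'.1 t with h' | h'
  · rcases hx.1 t with h'' | h''
    · rw [h', h'']
    · simp [h t h''] at h'
  · obtain ⟨s, hs, hxs⟩ := exists_apply_eq_one hx r (t r)
    rw [h', ← eq_of_apply_eq_one hx' (h s hxs) h' hs, hxs]

end assignmentVertices

end Assignment

section Lift

theorem sum_filter_extend_zero_s12 {σ τ M : Type*} [Fintype σ] [Fintype τ] [AddCommMonoid M]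
    {f : σ → τ} (hf : Injective f) (g : σ → M) (P : τ → Prop) [DecidablePred P] :
    ∑ t with P t, extend f g 0 t = ∑ s with P (f s), g s := by
  rw [sum_filter, sum_filter]
  refine (Fintype.sum_of_injective f hf _ _ (fun t ht => ?_) fun s => by
    simp [hf.extend_apply]).symm
  simp [extend_apply' _ _ _ (by simpa using ht)]

theorem extend_comp_eq_self {σ τ M : Type*} [Zero M] {f : σ → τ} (hf : Injective f)
    {x : τ → M} (hx : ∀ t ∉ Set.range f, x t = 0) : extend f (x ∘ f) 0 = x := by
  funext t
  by_cases ht : t ∈ Set.range f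
  · obtain ⟨s, rfl⟩ := ht
    exact hf.extend_apply _ _ s
  · rw [extend_apply' _ _ _ (by simpa using ht), hx t ht, Pi.zero_apply]

theorem extend_zero_apply_eq_ite {σ τ M : Type*} [Zero M] [DecidableEq τ] {f : σ → τ}
    {g : τ → σ} (hgf : LeftInverse g f) (l : σ → M) (t : τ) :
    extend f l 0 t = if t = f (g t) then l (g t) else 0 := by
  split_ifs with h
  · rw [h, hgf.injective.extend_apply, hgf]
  · exact extend_apply' _ _ _ fun ⟨s, hs⟩ => h (by rw [← hs, hgf])

theorem sum_filter_of_iff_eq {α M : Type*} [Fintype α] [AddCommMonoid M] {P : α → Prop}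
    [DecidablePred P] {a₀ : α} (h : ∀ a, P a ↔ a = a₀) (f : α → M) :
    ∑ a with P a, f a = f a₀ := by
  rw [show univ.filter P = {a₀} by ext; simp [h], sum_singleton]

variable {ι α κ β : Type*}

def liftTuple (π : κ → ι) (e : α ≃ β) (s : ι → α) : κ → β := e ∘ s ∘ π

theorem liftTuple_injective {π : κ → ι} (hπ : Surjective π) (e : α ≃ β) :
    Injective (liftTuple π e) := by
  intro s s' h
  funext r
  obtain ⟨r, rfl⟩ := hπ r
  exact e.injective (congrFun h r)

variable [Fintype ι] [DecidableEq ι] [Fintype α] [DecidableEq α]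
  [Fintype κ] [DecidableEq κ] [Fintype β] [DecidableEq β] {π : κ → ι} (hπ : Surjective π)
  (e : α ≃ β)
include hπ

theorem sum_filter_liftTuple (X : (ι → α) → ℝ) (r : κ) (b : β) :
    ∑ t with t r = b, extend (liftTuple π e) X 0 t = ∑ s with s (π r) = e.symm b, X s := by
  rw [sum_filter_extend_zero_s12 (liftTuple_injective hπ e)]
  simp [liftTuple, ← Equiv.eq_symm_apply]

theorem extend_liftTuple_mem {X : (ι → α) → ℝ} (hX : X ∈ assignmentVertices ι α) :
    extend (liftTuple π e) X 0 ∈ assignmentVertices κ β := by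
  refine ⟨fun t => ?_, fun r b => by rw [sum_filter_liftTuple hπ, hX.2]⟩
  by_cases ht : ∃ s, liftTuple π e s = t
  · obtain ⟨s, rfl⟩ := ht
    rw [(liftTuple_injective hπ e).extend_apply]
    exact hX.1 s
  · simp [extend_apply' _ _ _ ht]

theorem comp_liftTuple_mem {x : (κ → β) → ℝ} (hx : x ∈ assignmentVertices κ β)
    (hsupp : ∀ t ∉ Set.range (liftTuple π e), x t = 0) :
    x ∘ liftTuple π e ∈ assignmentVertices ι α := by
  refine ⟨fun s => hx.1 _, fun r a => ?_⟩
  obtain ⟨r, rfl⟩ := hπ r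
  have := sum_filter_liftTuple hπ e (x ∘ liftTuple π e) r (e a)
  rwa [extend_comp_eq_self (liftTuple_injective hπ e) hsupp, hx.2, e.symm_apply_apply,
    eq_comm] at this

theorem image_extend_liftTuple {Y : Type*} {S : Set Y} {Ψ : Y → (ι → α) → ℝ}
    {D : Set (ι → α)} (hΨ : Ψ '' S = assignmentVertices ι α ∩ {X | ∀ s ∉ D, X s = 0}) :
    (fun y => extend (liftTuple π e) (Ψ y) 0) '' S =
      assignmentVertices κ β ∩ {x | ∀ t ∉ liftTuple π e '' D, x t = 0} := by
  have hinj := liftTuple_injective hπ e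
  ext x
  constructor
  · rintro ⟨y, hy, rfl⟩
    obtain ⟨hmem, hsupp⟩ : Ψ y ∈ _ := hΨ ▸ Set.mem_image_of_mem Ψ hy
    refine ⟨extend_liftTuple_mem hπ e hmem, fun t ht => ?_⟩
    by_cases hts : ∃ s, liftTuple π e s = t
    · obtain ⟨s, rfl⟩ := hts
      dsimp only
      rw [hinj.extend_apply]
      exact hsupp s fun hs => ht ⟨s, hs, rfl⟩
    · simp [extend_apply' _ _ _ hts]
  · rintro ⟨hmem, hsupp⟩
    have hrange : ∀ t ∉ Set.range (liftTuple π e), x t = 0 := fun t ht =>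
      hsupp t fun ⟨s, _, hs⟩ => ht ⟨s, hs⟩
    obtain ⟨y, hy, hyx⟩ : x ∘ liftTuple π e ∈ Ψ '' S :=
      hΨ ▸ ⟨comp_liftTuple_mem hπ e hmem hrange, fun s hs =>
        hsupp _ fun ⟨s', hs', he⟩ => hs (hinj he ▸ hs')⟩
    exact ⟨y, hy, by dsimp only; rw [hyx, extend_comp_eq_self hinj hrange]⟩

end Lift

section Faces

theorem isExposed_inter_forall_eq_zero {ι : Type*} [Fintype ι] {A : Set (ι → ℝ)}
    (hA : ∀ x ∈ A, 0 ≤ x) (s : Set ι) :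
    IsExposed ℝ A (A ∩ {x | ∀ i ∉ s, x i = 0}) := by
  classical
  rintro ⟨x₀, hx₀A, hx₀⟩
  let l : StrongDual ℝ (ι → ℝ) := -∑ i ∈ sᶜ.toFinset, ContinuousLinearMap.proj i
  have hl : ∀ x, l x = -∑ i ∈ sᶜ.toFinset, x i := by simp [l]
  have hsum_nonneg : ∀ x ∈ A, 0 ≤ ∑ i ∈ sᶜ.toFinset, x i := fun x hx =>
    sum_nonneg fun i _ => hA x hx i
  have hl_eq_zero : ∀ x ∈ A, l x = 0 ↔ ∀ i ∉ s, x i = 0 := fun x hx => by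
    rw [hl, neg_eq_zero, sum_eq_zero_iff_of_nonneg fun i _ => hA x hx i]
    simp
  refine ⟨l, Set.ext fun x => ⟨fun ⟨hxA, hx⟩ => ⟨hxA, fun y hy => ?_⟩, fun ⟨hxA, hmax⟩ => ?_⟩⟩
  · rw [(hl_eq_zero x hxA).2 hx, hl, neg_nonpos]
    exact hsum_nonneg y hy
  · refine ⟨hxA, (hl_eq_zero x hxA).1 (le_antisymm ?_ ?_)⟩
    · rw [hl, neg_nonpos]
      exact hsum_nonneg x hxA
    · exact (hl_eq_zero x₀ hx₀A).2 hx₀ ▸ hmax x₀ hx₀A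

theorem IsExposed.convexHull_inter_eq {E : Type*} [NormedAddCommGroup E] [NormedSpace ℝ E]
    {A B : Set E} (hA : A.Finite) (hB : IsExposed ℝ (convexHull ℝ A) B) :
    convexHull ℝ (A ∩ B) = B := by
  have hBcomp : IsCompact B := hB.isCompact (hA.isCompact_convexHull ℝ)
  have hBconv : Convex ℝ B := hB.convex (convex_convexHull ℝ A)
  refine subset_antisymm (convexHull_min Set.inter_subset_right hBconv) ?_
  calc B = closure (convexHull ℝ (B.extremePoints ℝ)) :=
        (closure_convexHull_extremePoints hBcomp hBconv).symm
    _ ⊆ convexHull ℝ (A ∩ B) :=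
        closure_minimal (convexHull_mono fun x hx =>
            ⟨extremePoints_convexHull_subset (hB.isExtreme.extremePoints_subset_extremePoints hx),
              extremePoints_subset hx⟩)
          ((hA.subset Set.inter_subset_left).isCompact_convexHull ℝ).isClosed

end Faces

theorem Equiv.Perm.SameCycle.apply_eq_self_iff_of_injective {α : Type*} [Finite α]
    {c : Perm α} {f : α → α} (hf : Injective f) (hfc : ∀ z, f z = z ∨ f z = c z) {x y : α}
    (hxy : c.SameCycle x y) : f x = x ↔ f y = y := by
  suffices key : ∀ {a b}, c.SameCycle a b → f a = a → f b = b from ⟨key hxy, key hxy.symm⟩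
  intro a b hab ha
  obtain ⟨k, rfl⟩ := (sameCycle_inv.2 hab).exists_nat_pow_eq
  clear hab
  induction k with
  | zero => simpa using ha
  | succ k ih =>
    rw [pow_succ', Perm.mul_apply]
    rcases hfc (c⁻¹ ((c⁻¹ ^ k) a)) with h | h
    · exact h
    · rw [show c (c⁻¹ ((c⁻¹ ^ k) a)) = (c⁻¹ ^ k) a by simp] at h
      rw [hf (h.trans ih.symm), ih]

namespace StableSetFace

variable {n : ℕ}

/-- A value `(i, q)` is owned by the vertex `i`; through `slot`, `q` encodes a partner `j ≠ i`
and a kind bit. There are `2k(k-1)` values for `k = n + 2` vertices. -/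
abbrev Val (n : ℕ) : Type := Fin (n + 2) × Fin ((n + 1) * 2)

def slot (v : Val n) : Fin (n + 1) × Fin 2 := finProdFinEquiv.symm v.2

def partner (v : Val n) : Fin (n + 2) := finSuccAboveEquiv v.1 (slot v).1

def kind (v : Val n) : Fin 2 := (slot v).2

theorem partner_ne (v : Val n) : partner v ≠ v.1 := (finSuccAboveEquiv v.1 _).2

def mkVal (i : Fin (n + 2)) (j : {j // j ≠ i}) (b : Fin 2) : Val n :=
  (i, finProdFinEquiv ((finSuccAboveEquiv i).symm j, b))

@[simp] theorem mkVal_fst (i : Fin (n + 2)) (j : {j // j ≠ i}) (b : Fin 2) :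
    (mkVal i j b).1 = i :=
  rfl

@[simp] theorem partner_mkVal (i : Fin (n + 2)) (j : {j // j ≠ i}) (b : Fin 2) :
    partner (mkVal i j b) = j := by
  simp only [partner, slot, mkVal, Equiv.symm_apply_apply]
  exact congrArg Subtype.val ((finSuccAboveEquiv i).apply_symm_apply j)

@[simp] theorem kind_mkVal (i : Fin (n + 2)) (j : {j // j ≠ i}) (b : Fin 2) :
    kind (mkVal i j b) = b := by
  simp [kind, slot, mkVal]

theorem ext_partner_kind {v w : Val n} (h₁ : v.1 = w.1) (h₂ : partner v = partner w)
    (h₃ : kind v = kind w) : v = w := by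
  obtain ⟨i, q⟩ := v
  obtain ⟨i', q'⟩ := w
  obtain rfl : i = i' := h₁
  have : slot (i, q) = slot (i, q') :=
    Prod.ext ((finSuccAboveEquiv i).injective (Subtype.ext h₂)) h₃
  exact Prod.ext rfl (finProdFinEquiv.symm.injective this)

def swap (v : Val n) : Val n := mkVal (partner v) ⟨v.1, (partner_ne v).symm⟩ (kind v).rev

theorem swap_swap (v : Val n) : swap (swap v) = v :=
  ext_partner_kind (by simp [swap]) (by simp [swap]) (by simp [swap])

theorem kind_swap_ne (v : Val n) : kind (swap v) ≠ kind v := by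
  have : ∀ b : Fin 2, b.rev ≠ b := by decide
  simpa [swap] using this (kind v)

def rot : Equiv.Perm (Val n) := Equiv.addRight (0, 1)

@[simp] theorem rot_fst (v : Val n) : (rot v).1 = v.1 := by simp [rot]

theorem rot_ne (v : Val n) : rot v ≠ v := by
  intro h
  have : (v + (0, 1)).2 = v.2 := congrArg Prod.snd h
  rw [Prod.snd_add, add_eq_left, Fin.one_eq_zero_iff] at this
  omega

open Fin.CommRing in
theorem sameCycle_rot {v w : Val n} (h : v.1 = w.1) : rot.SameCycle v w := by
  refine ⟨((w.2 - v.2).val : ℤ), Prod.ext ?_ ?_⟩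
  · simp [rot, h]
  · simp [rot, nsmul_eq_mul, Fin.cast_val_eq_self]

variable (G : SimpleGraph (Fin (n + 2))) [DecidableRel G.Adj]

def IsEdge (v : Val n) : Prop := kind v = 0 ∧ G.Adj v.1 (partner v)

instance : DecidablePred (IsEdge G) := fun _ => inferInstanceAs (Decidable (_ ∧ _))

theorem involutive_link :
    Involutive fun v : Val n => if G.Adj v.1 (partner v) then swap v else v := by
  intro v
  by_cases hv : G.Adj v.1 (partner v)
  · have hsv : G.Adj (swap v).1 (partner (swap v)) := by simpa [swap] using hv.symm
    simp only [hv, hsv, if_true, swap_swap]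
  · simp [hv]

def link : Equiv.Perm (Val n) := (involutive_link G).toPerm

theorem link_apply (v : Val n) :
    link G v = if G.Adj v.1 (partner v) then swap v else v := rfl

@[simp] theorem link_link (v : Val n) : link G (link G v) = v := involutive_link G v

theorem link_eq_iff {v w : Val n} : link G v = w ↔ v = link G w := by
  constructor <;> rintro rfl <;> simp

theorem link_ne_self {v : Val n} (hv : G.Adj v.1 (partner v)) : link G v ≠ v := fun h =>
  kind_swap_ne v (congrArg kind (by rwa [link_apply, if_pos hv] at h))

theorem link_fst_of_isEdge {v : Val n} (hv : IsEdge G v) : (link G v).1 = partner v := by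
  simp [link_apply, hv.2, swap]

theorem not_isEdge_link {v : Val n} (hv : IsEdge G v) : ¬IsEdge G (link G v) := by
  simp [IsEdge, link_apply, hv.2, swap, hv.1]

def target (v : Val n) : Fin (n + 2) := if IsEdge G v then partner v else v.1

-- This invariance is what balances the sums along the third axis.
theorem target_link (v : Val n) : target G (link G v) = target G v := by
  by_cases hv : G.Adj v.1 (partner v)
  · rcases Fin.exists_fin_two.1 ⟨kind v, rfl⟩ with h | h <;>
      simp [target, IsEdge, link_apply, hv, hv.symm, swap, h]
  · simp [link_apply, hv]

-- The admissible cells of a value `v` with owner `i` and partner `j`; `cellEmbedding` gives them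
-- the weights `y i`, `1 - y i - [v is an edge value] y j` and `[v is an edge value] y j`.
def cellA (v : Val n) : Fin 3 → Val n := ![v, v, if IsEdge G v then link G v else v]

def cellB (v : Val n) : Fin 3 → Val n := ![v, rot v, link G v]

def cellC (v : Val n) : Fin 3 → Val n := ![v, rot v, v]

theorem leftInverse_cellA : LeftInverse (· 0) (cellA G) := fun _ => rfl

theorem leftInverse_cellB : LeftInverse (· 0) (cellB G) := fun _ => rfl

theorem leftInverse_cellC : LeftInverse (· 0) (cellC (n := n)) := fun _ => rfl

theorem cellA_ne_cellB (v : Val n) : cellA G v ≠ cellB G v := fun h =>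
  rot_ne v (congrFun h 1).symm

theorem cellA_ne_cellC (v : Val n) : cellA G v ≠ cellC v := fun h =>
  rot_ne v (congrFun h 1).symm

theorem cellB_ne_cellC {v : Val n} (hv : IsEdge G v) : cellB G v ≠ cellC v := fun h =>
  link_ne_self G hv.2 (congrFun h 2)

noncomputable def edgeWeight : (Fin (n + 2) → ℝ) →ₗ[ℝ] Val n → ℝ :=
  LinearMap.pi fun v => if IsEdge G v then LinearMap.proj (partner v) else 0

theorem edgeWeight_apply (y : Fin (n + 2) → ℝ) (v : Val n) :
    edgeWeight G y v = if IsEdge G v then y (partner v) else 0 := by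
  simp only [edgeWeight, LinearMap.pi_apply]
  split_ifs <;> rfl

noncomputable def cellEmbedding : (Fin (n + 2) → ℝ) →ᵃ[ℝ] (Fin 3 → Val n) → ℝ :=
  ((ExtendByZero.linearMap ℝ (cellA G)).comp (LinearMap.funLeft ℝ ℝ Prod.fst)).toAffineMap +
    (ExtendByZero.linearMap ℝ (cellB G)).toAffineMap.comp
      (AffineMap.const ℝ _ 1 - (LinearMap.funLeft ℝ ℝ Prod.fst).toAffineMap -
        (edgeWeight G).toAffineMap) +
    ((ExtendByZero.linearMap ℝ cellC).comp (edgeWeight G)).toAffineMap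

theorem cellEmbedding_apply (y : Fin (n + 2) → ℝ) :
    cellEmbedding G y = extend (cellA G) (fun v => y v.1) 0 +
      extend (cellB G) (fun v => 1 - y v.1 - edgeWeight G y v) 0 +
      extend cellC (edgeWeight G y) 0 :=
  rfl

def cellSupport : Set (Fin 3 → Val n) :=
  {s | s = cellA G (s 0) ∨ s = cellB G (s 0) ∨ IsEdge G (s 0) ∧ s = cellC (s 0)}

theorem cellEmbedding_apply_eq_ite (y : Fin (n + 2) → ℝ) (s : Fin 3 → Val n) :
    cellEmbedding G y s =
      if s = cellA G (s 0) then y (s 0).1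
      else if s = cellB G (s 0) then 1 - y (s 0).1 - edgeWeight G y (s 0)
      else if s = cellC (s 0) then edgeWeight G y (s 0)
      else 0 := by
  rw [cellEmbedding_apply, Pi.add_apply, Pi.add_apply,
    extend_zero_apply_eq_ite (leftInverse_cellA G), extend_zero_apply_eq_ite (leftInverse_cellB G),
    extend_zero_apply_eq_ite leftInverse_cellC]
  set v := s 0
  by_cases hA : s = cellA G v
  · rw [if_pos hA, if_pos hA, if_neg fun h => cellA_ne_cellB G v (hA.symm.trans h),
      if_neg fun h => cellA_ne_cellC G v (hA.symm.trans h)]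
    ring
  rw [if_neg hA, if_neg hA]
  by_cases hB : s = cellB G v
  · rw [if_pos hB, if_pos hB]
    by_cases hC : s = cellC v
    · rw [if_pos hC, edgeWeight_apply, if_neg fun hv => cellB_ne_cellC G hv (hB.symm.trans hC)]
      ring
    · rw [if_neg hC]
      ring
  · rw [if_neg hB, if_neg hB]
    ring

theorem cellEmbedding_eq_zero_of_notMem {y : Fin (n + 2) → ℝ} {s : Fin 3 → Val n}
    (hs : s ∉ cellSupport G) : cellEmbedding G y s = 0 := by
  simp only [cellSupport, Set.mem_ofPred_eq, not_or, not_and] at hs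
  rw [cellEmbedding_apply_eq_ite, if_neg hs.1, if_neg hs.2.1, edgeWeight_apply]
  by_cases hv : IsEdge G (s 0) <;> simp [hv, hs.2.2]

theorem sum_filter_cellA_two (f : Val n → ℝ) (w : Val n) :
    ∑ v with cellA G v 2 = w, f v =
      (if IsEdge G (link G w) then f (link G w) else 0) + (if IsEdge G w then 0 else f w) := by
  have hsplit : ∀ v, (if cellA G v 2 = w then f v else 0) =
      (if v = link G w then (if IsEdge G v then f v else 0) else 0) +
        (if v = w then (if IsEdge G v then 0 else f v) else 0) := fun v => by
    by_cases hv : IsEdge G v <;> simp [cellA, hv, link_eq_iff]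
  simp only [sum_filter, hsplit, sum_add_distrib, sum_ite_eq', mem_univ, if_true]

theorem sum_cellEmbedding (y : Fin (n + 2) → ℝ) (r : Fin 3) (w : Val n) :
    ∑ s with s r = w, cellEmbedding G y s = 1 := by
  simp only [cellEmbedding_apply, Pi.add_apply, sum_add_distrib,
    sum_filter_extend_zero_s12 (leftInverse_cellA G).injective,
    sum_filter_extend_zero_s12 (leftInverse_cellB G).injective,
    sum_filter_extend_zero_s12 leftInverse_cellC.injective]
  obtain rfl | rfl | rfl : r = 0 ∨ r = 1 ∨ r = 2 := by fin_cases r <;> simp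
  · rw [sum_filter_of_iff_eq (P := fun v => cellA G v 0 = w) (fun _ => Iff.rfl),
      sum_filter_of_iff_eq (P := fun v => cellB G v 0 = w) (fun _ => Iff.rfl),
      sum_filter_of_iff_eq (P := fun v => cellC v 0 = w) (fun _ => Iff.rfl)]
    ring
  · rw [sum_filter_of_iff_eq (P := fun v => cellA G v 1 = w) (fun _ => Iff.rfl),
      sum_filter_of_iff_eq (P := fun v => cellB G v 1 = w) (fun _ => rot.eq_symm_apply.symm),
      sum_filter_of_iff_eq (P := fun v => cellC v 1 = w) (fun _ => rot.eq_symm_apply.symm)]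
    have : (rot.symm w).1 = w.1 := by simpa using (rot_fst (rot.symm w)).symm
    rw [this]
    ring
  · rw [sum_filter_cellA_two,
      sum_filter_of_iff_eq (P := fun v => cellB G v 2 = w) (fun _ => link_eq_iff G),
      sum_filter_of_iff_eq (P := fun v => cellC v 2 = w) (fun _ => Iff.rfl)]
    have hA : ∀ u, (if IsEdge G u then y u.1 else 0) + (1 - y u.1 - edgeWeight G y u) =
        1 - y (target G u) := fun u => by
      rw [edgeWeight_apply, target]
      split_ifs <;> ring
    have hC : (if IsEdge G w then 0 else y w.1) + edgeWeight G y w = y (target G w) := by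
      rw [edgeWeight_apply, target]
      split_ifs <;> ring
    linarith [hA (link G w), congrArg y (target_link G w)]

theorem cellEmbedding_mem {y : Fin (n + 2) → ℝ} (hy : y ∈ SSP G) :
    cellEmbedding G y ∈ assignmentVertices (Fin 3) (Val n) := by
  refine ⟨fun s => ?_, sum_cellEmbedding G y⟩
  have hedge : ∀ v, edgeWeight G y v = 0 ∨ edgeWeight G y v = 1 := fun v => by
    rw [edgeWeight_apply]
    split_ifs
    exacts [hy.1 _, Or.inl rfl]
  have hcomplement : ∀ v, 1 - y v.1 - edgeWeight G y v = 0 ∨ 1 - y v.1 - edgeWeight G y v = 1 :=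
    fun v => by
      rw [edgeWeight_apply]
      split_ifs with hv
      · have hsum := hy.2 _ _ hv.2
        rcases hy.1 v.1 with h | h <;> rcases hy.1 (partner v) with h' | h' <;>
          rw [h, h'] at hsum ⊢
        · exact Or.inr (by norm_num)
        · exact Or.inl (by norm_num)
        · exact Or.inl (by norm_num)
        · norm_num at hsum
      · rcases hy.1 v.1 with h | h <;> simp [h]
  rw [cellEmbedding_apply_eq_ite]
  split_ifs
  exacts [hy.1 _, hcomplement _, hedge _, Or.inl rfl]

-- A vertex of the face: one admissible cell per value, injective along the two free axes.
structure CellChoice where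
  cell : Val n → Fin 3 → Val n
  mem_cells : ∀ v, cell v = cellA G v ∨ cell v = cellB G v ∨ IsEdge G v ∧ cell v = cellC v
  injective_one : Injective fun v => cell v 1
  injective_two : Injective fun v => cell v 2

namespace CellChoice

variable {G} (T : CellChoice G)

theorem apply_one_eq_self_iff (v : Val n) : T.cell v 1 = v ↔ T.cell v = cellA G v := by
  rcases T.mem_cells v with h | h | ⟨-, h⟩ <;> rw [h]
  · simp [cellA]
  · exact iff_of_false (rot_ne v) (cellA_ne_cellB G v).symm
  · exact iff_of_false (rot_ne v) (cellA_ne_cellC G v).symm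

theorem apply_one_eq_rot_of_ne {v : Val n} (h : T.cell v 1 ≠ v) : T.cell v 1 = rot v := by
  rcases T.mem_cells v with h' | h' | ⟨-, h'⟩ <;> rw [h'] at h ⊢
  · exact absurd rfl h
  · rfl
  · rfl

theorem apply_two_eq_link_of_ne {v : Val n} (h : T.cell v 2 ≠ v) : T.cell v 2 = link G v := by
  rcases T.mem_cells v with h' | h' | ⟨-, h'⟩ <;> rw [h'] at h ⊢
  · simp only [cellA, Matrix.cons_val_two, Matrix.tail_cons, Matrix.head_cons] at h ⊢
    split_ifs at h ⊢
    · rfl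
    · exact absurd rfl h
  · rfl
  · exact absurd rfl h

theorem apply_one_eq_self_iff_of_fst_eq {v w : Val n} (h : v.1 = w.1) :
    T.cell v 1 = v ↔ T.cell w 1 = w :=
  (sameCycle_rot h).apply_eq_self_iff_of_injective T.injective_one fun _ =>
    or_iff_not_imp_left.2 T.apply_one_eq_rot_of_ne

theorem apply_two_link_eq_self_iff (v : Val n) :
    T.cell (link G v) 2 = link G v ↔ T.cell v 2 = v :=
  ((Equiv.Perm.SameCycle.refl _ v).apply_right).symm.apply_eq_self_iff_of_injective
    T.injective_two fun _ => or_iff_not_imp_left.2 T.apply_two_eq_link_of_ne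

theorem apply_two_eq_self_iff_apply_one {w : Val n} (hw : ¬IsEdge G w) (hlink : link G w ≠ w) :
    T.cell w 2 = w ↔ T.cell w 1 = w := by
  rcases T.mem_cells w with h | h | ⟨hw', -⟩
  · simp [h, cellA, hw]
  · rw [h]
    exact iff_of_false hlink (rot_ne w)
  · exact absurd hw' hw

theorem apply_two_ne_self_of_isEdge {v : Val n} (hv : IsEdge G v) (h : T.cell v 1 = v) :
    T.cell v 2 ≠ v := by
  rw [(T.apply_one_eq_self_iff v).1 h]
  simpa [cellA, hv] using link_ne_self G hv.2

def stableSet (i : Fin (n + 2)) : ℝ := if T.cell (i, 0) 1 = (i, 0) then 1 else 0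

theorem stableSet_eq_zero_or_one (i : Fin (n + 2)) : T.stableSet i = 0 ∨ T.stableSet i = 1 := by
  unfold stableSet
  split_ifs <;> simp

theorem stableSet_eq_one_iff (v : Val n) : T.stableSet v.1 = 1 ↔ T.cell v 1 = v := by
  rw [← T.apply_one_eq_self_iff_of_fst_eq (v := (v.1, 0)) (w := v) rfl, stableSet]
  split_ifs with h <;> simp [h]

theorem stableSet_partner_eq_one_iff {v : Val n} (hv : IsEdge G v) :
    T.stableSet (partner v) = 1 ↔ T.cell v 2 = v := by
  have hlink : link G (link G v) ≠ link G v := by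
    rw [link_link]
    exact (link_ne_self G hv.2).symm
  rw [← link_fst_of_isEdge G hv, stableSet_eq_one_iff,
    ← T.apply_two_eq_self_iff_apply_one (not_isEdge_link G hv) hlink,
    apply_two_link_eq_self_iff]

theorem stableSet_mem : T.stableSet ∈ SSP G := by
  refine ⟨T.stableSet_eq_zero_or_one, fun i j hij => ?_⟩
  let v : Val n := mkVal i ⟨j, hij.ne'⟩ 0
  have hv : IsEdge G v := ⟨kind_mkVal .., by simpa [v] using hij⟩
  rcases T.stableSet_eq_zero_or_one i with hi | hi
  · rcases T.stableSet_eq_zero_or_one j with hj | hj <;> simp [hi, hj]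
  · have hj : T.stableSet j ≠ 1 := fun hj =>
      T.apply_two_ne_self_of_isEdge hv ((T.stableSet_eq_one_iff v).1 hi)
        ((T.stableSet_partner_eq_one_iff hv).1 (by simpa [v] using hj))
    rw [hi, (T.stableSet_eq_zero_or_one j).resolve_right hj]
    norm_num

theorem cellEmbedding_stableSet_apply_cell (v : Val n) :
    cellEmbedding G T.stableSet (T.cell v) = 1 := by
  have h0 : T.cell v 0 = v := by rcases T.mem_cells v with h | h | ⟨-, h⟩ <;> rw [h] <;> rfl
  have hzero : ∀ i, T.stableSet i ≠ 1 → T.stableSet i = 0 := fun i =>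
    (T.stableSet_eq_zero_or_one i).resolve_right
  rw [cellEmbedding_apply_eq_ite, h0]
  rcases T.mem_cells v with h | h | ⟨hv, h⟩
  · rw [if_pos h]
    exact (T.stableSet_eq_one_iff v).2 ((T.apply_one_eq_self_iff v).2 h)
  · have hself : T.cell v 1 ≠ v := by rw [h]; exact rot_ne v
    have hedge : edgeWeight G T.stableSet v = 0 := by
      rw [edgeWeight_apply]
      split_ifs with hv
      · refine hzero _ fun h' => ?_
        rw [T.stableSet_partner_eq_one_iff hv, h] at h'
        exact link_ne_self G hv.2 h'
      · rfl
    rw [if_neg (h ▸ (cellA_ne_cellB G v).symm), if_pos h, hedge,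
      hzero _ fun h' => hself ((T.stableSet_eq_one_iff v).1 h')]
    norm_num
  · rw [if_neg (h ▸ (cellA_ne_cellC G v).symm), if_neg (h ▸ (cellB_ne_cellC G hv).symm), if_pos h,
      edgeWeight_apply, if_pos hv, T.stableSet_partner_eq_one_iff hv, h]
    rfl

end CellChoice

theorem cellEmbedding_injective : Injective (cellEmbedding G) := by
  intro y y' h
  funext i
  have key : ∀ y, cellEmbedding G y (cellA G (i, 0)) = y i := fun y => by
    rw [cellEmbedding_apply_eq_ite]
    exact if_pos rfl
  rw [← key y, ← key y', h]

theorem image_cellEmbedding :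
    cellEmbedding G '' SSP G =
      assignmentVertices (Fin 3) (Val n) ∩ {X | ∀ s ∉ cellSupport G, X s = 0} := by
  ext X
  constructor
  · rintro ⟨y, hy, rfl⟩
    exact ⟨cellEmbedding_mem G hy, fun s hs => cellEmbedding_eq_zero_of_notMem G hs⟩
  · rintro ⟨hX, hsupp⟩
    choose cell hcell0 hcell1 using fun v => assignmentVertices.exists_apply_eq_one hX 0 v
    have hinj : ∀ r, Injective fun v => cell v r := fun r v v' h => by
      rw [← hcell0 v, ← hcell0 v',
        assignmentVertices.eq_of_apply_eq_one hX (hcell1 v) (hcell1 v') h]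
    have hmem : ∀ v, cell v ∈ cellSupport G := fun v => by
      by_contra h
      exact zero_ne_one ((hsupp _ h).symm.trans (hcell1 v))
    let T : CellChoice G :=
      { cell
        mem_cells := fun v => by simpa [cellSupport, hcell0 v] using hmem v
        injective_one := hinj 1
        injective_two := hinj 2 }
    refine ⟨T.stableSet, T.stableSet_mem, (assignmentVertices.eq_of_forall_apply_eq_one hX
      (cellEmbedding_mem G T.stableSet_mem) fun s hs => ?_).symm⟩
    rw [assignmentVertices.eq_of_apply_eq_one hX hs (hcell1 (s 0)) (hcell0 _).symm]
    exact T.cellEmbedding_stableSet_apply_cell (s 0)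

end StableSetFace

/-- For `p ≥ 3`, `k ≥ 2`, any graph `G` on `k` vertices and `m = 2k(k−1)`,
`conv(SSP(G))` is affinely equivalent to an exposed face of `conv(PAP^p_m)`. -/
theorem stmt12 (p k : ℕ) (hp : 3 ≤ p) (hk : 2 ≤ k) (G : SimpleGraph (Fin k)) :
    ∀ m : ℕ, m = 2 * k * (k - 1) →
      ∃ F : Set ((Fin p → Fin m) → ℝ),
        IsExposed ℝ (convexHull ℝ (PAP p m)) F ∧
        ∃ φ : (Fin k → ℝ) →ᵃ[ℝ] ((Fin p → Fin m) → ℝ),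
          Function.Injective φ ∧ φ '' (convexHull ℝ (SSP G)) = F := by
  intro m hm
  rw [PAP_eq_assignmentVertices]
  obtain ⟨n, rfl⟩ : ∃ n, k = n + 2 := ⟨k - 2, by omega⟩
  classical
  let π : Fin p → Fin 3 := fun r => ⟨min r 2, by omega⟩
  have hπ : Surjective π := fun r =>
    ⟨⟨r, by omega⟩, Fin.ext (by simp only [inf_eq_left, π]; omega)⟩
  have hcard : Fintype.card (StableSetFace.Val n) = m := by
    simp only [Fintype.card_prod, Fintype.card_fin, hm, Nat.add_one_sub_one]
    ring
  let e := Fintype.equivFinOfCardEq hcard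
  let D := liftTuple π e '' StableSetFace.cellSupport G
  let φ := (ExtendByZero.linearMap ℝ (liftTuple π e)).toAffineMap.comp
    (StableSetFace.cellEmbedding G)
  have himage : φ '' SSP G = assignmentVertices (Fin p) (Fin m) ∩ {x | ∀ t ∉ D, x t = 0} :=
    image_extend_liftTuple hπ e (StableSetFace.image_cellEmbedding G)
  have hface := isExposed_inter_forall_eq_zero (fun _ => assignmentVertices.convexHull_nonneg) D
  refine ⟨_, hface, φ, (extend_injective (liftTuple_injective hπ e) 0).comp
    (StableSetFace.cellEmbedding_injective G), ?_⟩
  rw [φ.image_convexHull, himage, ← hface.convexHull_inter_eq assignmentVertices.finite,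
    ← Set.inter_assoc, Set.inter_eq_left.2 (subset_convexHull ℝ _)]
end

section
/- For every n ≥ 1, the Boolean quadratic polytope conv(BQP_n) is affinely equivalent to an exposed face of the quadratic linear ordering polytope conv(QLOP_m) with m = 2n: there is an exposed face F of conv(QLOP_{2n}) and an injective affine map φ : ℝ^{Δ_n} → ℝ^{d} (d the number of coordinates of QLOP_{2n}) with φ(conv(BQP_n)) = F. -/
/-- Index set `{(i,j) : 1 ≤ i < j ≤ m}` for linear ordering polytopes. -/
def PairIdx (m : ℕ) : Type := {q : Fin m × Fin m // q.1 < q.2}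

/-- The vertex set of the linear ordering polytope: 0/1 vectors satisfying the
3-dicycle inequalities `0 ≤ y_{ij} + y_{jk} − y_{ik} ≤ 1` for `i < j < k`. -/
def LOP (m : ℕ) : Set (PairIdx m → ℝ) :=
  {y | (∀ q, y q = 0 ∨ y q = 1) ∧
       ∀ (i j k : Fin m) (hij : i < j) (hjk : j < k),
         0 ≤ y ⟨(i, j), hij⟩ + y ⟨(j, k), hjk⟩ - y ⟨(i, k), hij.trans hjk⟩ ∧
         y ⟨(i, j), hij⟩ + y ⟨(j, k), hjk⟩ - y ⟨(i, k), hij.trans hjk⟩ ≤ 1}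

/-- Index set of all lexicographically ordered pairs `(i,j) ≺ (k,l)` of pairs
`i < j`, `k < l`, for the quadratic coordinates `z_{ijkl}`. -/
def QIdx (m : ℕ) : Type :=
  {r : PairIdx m × PairIdx m //
    r.1.val.1 < r.2.val.1 ∨ (r.1.val.1 = r.2.val.1 ∧ r.1.val.2 < r.2.val.2)}

/-- The vertex set of the quadratic linear ordering polytope: vectors `(y, z)` with
`y ∈ LOP_m` and `z_{ijkl} = y_{ij} · y_{kl}` for all `(i,j) ≺ (k,l)`. -/
def QLOP (m : ℕ) : Set ((PairIdx m → ℝ) × (QIdx m → ℝ)) :=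
  {w | w.1 ∈ LOP m ∧ ∀ r : QIdx m, w.2 r = w.1 r.val.1 * w.1 r.val.2}

section ConvexFace

variable {E : Type*} [AddCommGroup E] [Module ℝ E]

theorem mem_convexHull_sep_of_le_apply {s : Set E} (l : E →ₗ[ℝ] ℝ) {C : ℝ}
    (hs : ∀ y ∈ s, l y ≤ C) {x : E} (hx : x ∈ convexHull ℝ s) (hxC : C ≤ l x) :
    x ∈ convexHull ℝ {y ∈ s | l y = C} := by
  set t := {y ∈ s | l y = C}
  have ht : ∀ y ∈ convexHull ℝ t, l y = C := fun y hy =>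
    convexHull_min (fun z hz => hz.2) (convex_hyperplane l.isLinear C) hy
  have hmix : ∀ a ∈ {y | l y < C}, ∀ b ∈ convexHull ℝ t, ∀ θ μ : ℝ, 0 ≤ θ → 0 ≤ μ →
      θ + μ = 1 → θ • a + μ • b ∈ {y | l y < C} ∪ convexHull ℝ t := by
    intro a ha b hb θ μ hθ hμ hθμ
    rcases hθ.eq_or_lt with rfl | hθ
    · right
      simpa [show μ = 1 by linarith] using hb
    · left
      simp only [Set.mem_ofPred_eq, map_add, map_smul, smul_eq_mul, ht b hb] at ha ⊢
      have hC : θ * C + μ * C = C := by rw [← add_mul, hθμ, one_mul]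
      linarith [mul_lt_mul_of_pos_left ha hθ]
  -- Points below the level `C` together with `conv t` form a convex set containing `s`.
  have hK : Convex ℝ ({y | l y < C} ∪ convexHull ℝ t) := by
    rintro a (ha | ha) b (hb | hb) θ μ hθ hμ hθμ
    · exact Or.inl (convex_halfSpace_lt l.isLinear C ha hb hθ hμ hθμ)
    · exact hmix a ha b hb θ μ hθ hμ hθμ
    · rw [add_comm]
      exact hmix b hb a ha μ θ hμ hθ (by linarith)
    · exact Or.inr (convex_convexHull ℝ t ha hb hθ hμ hθμ)
  have hsK : s ⊆ {y | l y < C} ∪ convexHull ℝ t := fun y hy =>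
    (hs y hy).lt_or_eq.imp id fun h => subset_convexHull ℝ t ⟨hy, h⟩
  exact (convexHull_min hsK hK hx).resolve_left (not_lt.2 hxC)

theorem isExposed_convexHull_sep [TopologicalSpace E] {s : Set E} (l : StrongDual ℝ E)
    {C : ℝ} (hs : ∀ y ∈ s, l y ≤ C) :
    IsExposed ℝ (convexHull ℝ s) (convexHull ℝ {y ∈ s | l y = C}) := by
  rintro ⟨x₀, hx₀⟩
  refine ⟨l, ?_⟩
  have hle : ∀ y ∈ convexHull ℝ s, l y ≤ C := fun y hy =>
    convexHull_min hs (convex_halfSpace_le l.isLinear C) hy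
  have heq : ∀ y ∈ convexHull ℝ {y ∈ s | l y = C}, l y = C := fun y hy =>
    convexHull_min (fun z hz => hz.2) (convex_hyperplane l.isLinear C) hy
  have hsub : convexHull ℝ {y ∈ s | l y = C} ⊆ convexHull ℝ s :=
    convexHull_mono (Set.sep_subset s _)
  ext x
  refine ⟨fun hx => ⟨hsub hx, fun y hy => (hle y hy).trans (heq x hx).ge⟩, ?_⟩
  rintro ⟨hx, hmax⟩
  exact mem_convexHull_sep_of_le_apply l.toLinearMap hs hx
    ((heq x₀ hx₀).symm.le.trans (hmax x₀ (hsub hx₀)))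

end ConvexFace

def optionCoord {ι : Type*} : Option ι → (ι → ℝ) →ᵃ[ℝ] ℝ
  | none => AffineMap.const ℝ _ 1
  | some i => (LinearMap.proj i : (ι → ℝ) →ₗ[ℝ] ℝ).toAffineMap

theorem optionCoord_apply {ι : Type*} (o : Option ι) (x : ι → ℝ) :
    optionCoord o x = o.elim 1 x := by
  cases o <;> rfl

instance (m : ℕ) : Fintype (PairIdx m) :=
  inferInstanceAs (Fintype {q : Fin m × Fin m // q.1 < q.2})

theorem PairIdx.ext_iff {m : ℕ} {q q' : PairIdx m} : q = q' ↔ q.1.1 = q'.1.1 ∧ q.1.2 = q'.1.2 :=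
  Subtype.ext_iff.trans Prod.ext_iff

namespace Idx

def ofPair {n : ℕ} (i j : Fin n) : Idx n := ⟨(min i j, max i j), min_le_max⟩

end Idx

section OrderingPolytopes

variable {m : ℕ}

theorem le_one_of_mem_LOP {y : PairIdx m → ℝ} (hy : y ∈ LOP m) (q : PairIdx m) :
    y q ≤ 1 := by
  rcases hy.1 q with h | h <;> simp [h]

def qlopOf (y : PairIdx m → ℝ) : (PairIdx m → ℝ) × (QIdx m → ℝ) :=
  (y, fun r => y r.1.1 * y r.1.2)

theorem qlopOf_mem_QLOP {y : PairIdx m → ℝ} (hy : y ∈ LOP m) : qlopOf y ∈ QLOP m :=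
  ⟨hy, fun _ => rfl⟩

theorem qlopOf_fst_of_mem_QLOP {w : (PairIdx m → ℝ) × (QIdx m → ℝ)} (hw : w ∈ QLOP m) :
    qlopOf w.1 = w :=
  Prod.ext rfl (funext fun r => (hw.2 r).symm)

end OrderingPolytopes

section BlockOrder

variable {n : ℕ}

def half (a : Fin (2 * n)) : Fin n := ⟨a / 2, by omega⟩

def blockPair (i : Fin n) : PairIdx (2 * n) :=
  ⟨(⟨2 * i, by omega⟩, ⟨2 * i + 1, by omega⟩), Fin.mk_lt_mk.mpr (by omega)⟩

def blockOf (q : PairIdx (2 * n)) : Option (Fin n) :=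
  if half q.1.1 = half q.1.2 then some (half q.1.1) else none

theorem blockOf_eq_some_iff {q : PairIdx (2 * n)} {i : Fin n} :
    blockOf q = some i ↔ q = blockPair i := by
  have hq := Fin.lt_def.1 q.2
  rw [PairIdx.ext_iff]
  simp only [blockOf, blockPair, half, Option.ite_none_right_eq_some, Option.some.injEq,
    Fin.ext_iff]
  omega

theorem blockOf_blockPair (i : Fin n) : blockOf (blockPair i) = some i :=
  blockOf_eq_some_iff.2 rfl

-- Blocks in increasing order, with `2i` before `2i+1` iff `u i = 1`.
def blockOrder (u : Fin n → ℝ) (q : PairIdx (2 * n)) : ℝ := (blockOf q).elim 1 u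

theorem blockOrder_mem_LOP {u : Fin n → ℝ} (hu : ∀ i, u i = 0 ∨ u i = 1) :
    blockOrder u ∈ LOP (2 * n) := by
  have hu' : ∀ i, 0 ≤ u i ∧ u i ≤ 1 := fun i => by rcases hu i with h | h <;> simp [h]
  refine ⟨fun q => ?_, fun i j k hij hjk => ?_⟩
  · unfold blockOrder
    cases blockOf q
    exacts [Or.inr rfl, hu _]
  · unfold blockOrder blockOf half
    rw [Fin.lt_def] at hij hjk
    simp only [Fin.ext_iff]
    split_ifs <;> simp only [Option.elim_some, Option.elim_none] <;>
      first
      | omega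
      | constructor <;> linarith [hu' ⟨i / 2, by omega⟩, hu' ⟨j / 2, by omega⟩]

theorem eq_blockOrder_of_forall_blockOf_eq_none {y : PairIdx (2 * n) → ℝ}
    (hy : ∀ q, blockOf q = none → y q = 1) : y = blockOrder (y ∘ blockPair) := by
  funext q
  cases h : blockOf q with
  | none => simp [blockOrder, h, hy q h]
  | some i =>
    obtain rfl := blockOf_eq_some_iff.1 h
    simp [blockOrder, h]

end BlockOrder

section Embedding

variable {n : ℕ}

def bqpOf (u : Fin n → ℝ) (p : Idx n) : ℝ := u p.1.1 * u p.1.2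

theorem bqpOf_ofPair (u : Fin n → ℝ) (i j : Fin n) : bqpOf u (Idx.ofPair i j) = u i * u j := by
  rcases le_total i j with h | h <;> simp [bqpOf, Idx.ofPair, h, mul_comm]

theorem BQP_eq_image_bqpOf : BQP n = bqpOf '' {u | ∀ i, u i = 0 ∨ u i = 1} := by
  ext x
  constructor
  · rintro ⟨h01, hmul⟩
    refine ⟨fun i => x (Idx.ofPair i i), fun i => h01 _, funext fun ⟨(i, j), hij⟩ => ?_⟩
    rcases (show i ≤ j from hij).lt_or_eq with hlt | rfl
    · simpa [bqpOf, Idx.ofPair] using (hmul i j hlt).symm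
    · simpa [bqpOf, Idx.ofPair] using (IsIdempotentElem.iff_eq_zero_or_one.2 (h01 _)).eq
  · rintro ⟨u, hu, rfl⟩
    have idem i : u i * u i = u i := (IsIdempotentElem.iff_eq_zero_or_one.2 (hu i)).eq
    refine ⟨fun p => ?_, fun i j _ => ?_⟩
    · rcases hu p.1.1 with h | h <;> rcases hu p.1.2 with h' | h' <;> simp [bqpOf, h, h']
    · simp only [bqpOf, idem]

-- The coordinate of `x` standing for the product of the bits of blocks `a` and `b`, where `none`
-- is a missing factor and the result `none` is the constant `1`.
def productCoord : Option (Fin n) → Option (Fin n) → Option (Idx n)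
  | some i, some j => some (Idx.ofPair i j)
  | some i, none | none, some i => some (Idx.ofPair i i)
  | none, none => none

theorem elim_productCoord_bqpOf {u : Fin n → ℝ} (hu : ∀ i, u i = 0 ∨ u i = 1)
    (a b : Option (Fin n)) : (productCoord a b).elim 1 (bqpOf u) = a.elim 1 u * b.elim 1 u := by
  have idem i : u i * u i = u i := (IsIdempotentElem.iff_eq_zero_or_one.2 (hu i)).eq
  cases a <;> cases b <;> simp [productCoord, bqpOf_ofPair, idem]

def bqpEmbedding (n : ℕ) : (Idx n → ℝ) →ᵃ[ℝ] (PairIdx (2 * n) → ℝ) × (QIdx (2 * n) → ℝ) :=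
  (AffineMap.pi fun q => optionCoord (productCoord (blockOf q) none)).prod
    (AffineMap.pi fun r => optionCoord (productCoord (blockOf r.1.1) (blockOf r.1.2)))

theorem bqpEmbedding_apply (x : Idx n → ℝ) :
    bqpEmbedding n x = (fun q => (productCoord (blockOf q) none).elim 1 x,
      fun r => (productCoord (blockOf r.1.1) (blockOf r.1.2)).elim 1 x) := by
  ext <;> simp [bqpEmbedding, optionCoord_apply]

theorem bqpEmbedding_bqpOf {u : Fin n → ℝ} (hu : ∀ i, u i = 0 ∨ u i = 1) :
    bqpEmbedding n (bqpOf u) = qlopOf (blockOrder u) := by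
  simp only [bqpEmbedding_apply, elim_productCoord_bqpOf hu, Option.elim_none, mul_one]
  rfl

theorem bqpEmbedding_injective (n : ℕ) : Function.Injective (bqpEmbedding n) := by
  intro x x' h
  rw [bqpEmbedding_apply, bqpEmbedding_apply, Prod.mk.injEq] at h
  funext ⟨(i, j), hij⟩
  rcases (show i ≤ j from hij).lt_or_eq with hlt | rfl
  · have hblk : (blockPair i).1.1 < (blockPair j).1.1 :=
      Fin.mk_lt_mk.2 (by have := Fin.lt_def.1 hlt; omega)
    have hz := congrFun h.2 ⟨(blockPair i, blockPair j), Or.inl hblk⟩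
    simp only [blockOf_blockPair, productCoord, Idx.ofPair, min_eq_left hlt.le,
      max_eq_right hlt.le] at hz
    exact hz
  · have hy := congrFun h.1 (blockPair i)
    simp only [blockOf_blockPair, productCoord, Idx.ofPair, min_self, max_self] at hy
    exact hy

end Embedding

section CrossSum

variable {n : ℕ}

def crossPairs (n : ℕ) : Finset (PairIdx (2 * n)) := Finset.univ.filter fun q => blockOf q = none

def crossSum (n : ℕ) : StrongDual ℝ ((PairIdx (2 * n) → ℝ) × (QIdx (2 * n) → ℝ)) :=
  ∑ q ∈ crossPairs n, (ContinuousLinearMap.proj q).comp (ContinuousLinearMap.fst ℝ _ _)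

theorem crossSum_apply (w : (PairIdx (2 * n) → ℝ) × (QIdx (2 * n) → ℝ)) :
    crossSum n w = ∑ q ∈ crossPairs n, w.1 q := by
  simp [crossSum]

theorem crossSum_le {w : (PairIdx (2 * n) → ℝ) × (QIdx (2 * n) → ℝ)} (hw : w ∈ QLOP (2 * n)) :
    crossSum n w ≤ (crossPairs n).card := by
  rw [crossSum_apply, Finset.card_eq_sum_ones, Nat.cast_sum, Nat.cast_one]
  exact Finset.sum_le_sum fun q _ => le_one_of_mem_LOP hw.1 q

theorem crossSum_eq_card_iff {w : (PairIdx (2 * n) → ℝ) × (QIdx (2 * n) → ℝ)}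
    (hw : w ∈ QLOP (2 * n)) :
    crossSum n w = (crossPairs n).card ↔ ∀ q, blockOf q = none → w.1 q = 1 := by
  rw [crossSum_apply, Finset.card_eq_sum_ones, Nat.cast_sum, Nat.cast_one,
    Finset.sum_eq_sum_iff_of_le fun q _ => le_one_of_mem_LOP hw.1 q]
  simp [crossPairs]

end CrossSum

theorem image_bqpEmbedding_BQP (n : ℕ) :
    bqpEmbedding n '' BQP n = {w ∈ QLOP (2 * n) | crossSum n w = (crossPairs n).card} := by
  rw [BQP_eq_image_bqpOf, Set.image_image]
  ext w
  simp only [Set.mem_image]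
  constructor
  · rintro ⟨u, hu, rfl⟩
    have hw := qlopOf_mem_QLOP (blockOrder_mem_LOP hu)
    rw [bqpEmbedding_bqpOf hu]
    exact ⟨hw, (crossSum_eq_card_iff hw).2 fun q hq => by simp [qlopOf, blockOrder, hq]⟩
  · rintro ⟨hw, hsum⟩
    refine ⟨w.1 ∘ blockPair, fun i => hw.1.1 _, ?_⟩
    rw [bqpEmbedding_bqpOf (u := w.1 ∘ blockPair) fun i => hw.1.1 _,
      ← eq_blockOrder_of_forall_blockOf_eq_none ((crossSum_eq_card_iff hw).1 hsum)]
    exact qlopOf_fst_of_mem_QLOP hw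

theorem stmt13_general (n : ℕ) :
    ∃ F : Set ((PairIdx (2 * n) → ℝ) × (QIdx (2 * n) → ℝ)),
      IsExposed ℝ (convexHull ℝ (QLOP (2 * n))) F ∧
      ∃ φ : (Idx n → ℝ) →ᵃ[ℝ] ((PairIdx (2 * n) → ℝ) × (QIdx (2 * n) → ℝ)),
        Function.Injective φ ∧ φ '' (convexHull ℝ (BQP n)) = F := by
  refine ⟨_, ?_, bqpEmbedding n, bqpEmbedding_injective n, rfl⟩
  rw [AffineMap.image_convexHull, image_bqpEmbedding_BQP]
  exact isExposed_convexHull_sep (crossSum n) fun w hw => crossSum_le hw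

/-- For `n ≥ 1`, `conv(BQP_n)` is affinely equivalent to an exposed face of the
quadratic linear ordering polytope `conv(QLOP_{2n})`. -/
theorem stmt13 (n : ℕ) (hn : 1 ≤ n) :
    ∃ F : Set ((PairIdx (2 * n) → ℝ) × (QIdx (2 * n) → ℝ)),
      IsExposed ℝ (convexHull ℝ (QLOP (2 * n))) F ∧
      ∃ φ : (Idx n → ℝ) →ᵃ[ℝ] ((PairIdx (2 * n) → ℝ) × (QIdx (2 * n) → ℝ)),
        Function.Injective φ ∧ φ '' (convexHull ℝ (BQP n)) = F :=
  stmt13_general n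
end

section
/- Let n ≥ 1, m = 2n, and J = {(2i−1, 2i) : i = 1,…,n}. Then {y ∈ LOP_m : y_{ij} = 0 for all pairs i<j with (i,j) ∉ J} is exactly the set of vectors that vanish on all coordinates outside J and take arbitrary values in {0,1} on the n coordinates in J. Consequently the set F = conv(LOP_m) ∩ {y : y_{ij} = 0 for all (i,j) ∉ J} is an exposed face of conv(LOP_m) that is affinely equivalent to the n-dimensional cube [0,1]^n. -/
/-- The set `J = {(2i−1, 2i) : i = 1,…,n}` of pairs (0-indexed: `(2i, 2i+1)`). -/
def Jlop (n : ℕ) : Set (PairIdx (2 * n)) :=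
  {q | ∃ i : ℕ, i < n ∧ (q.val.1 : ℕ) = 2 * i ∧ (q.val.2 : ℕ) = 2 * i + 1}

/-!
A 0/1 vector supported on `J` satisfies every triangle inequality, since a triangle `i < j < k`
never has its long pair `(i, k)` in `J` and never has both short pairs in `J`. The
face is exposed by minus the sum of the coordinates outside `J`, which is `≤ 0` on the
nonnegative polytope. Since `conv(LOP) ⊆ [0,1]^pairs`, extension by zero from the coordinates in
`J` maps the cube `[0,1]^n = conv {0,1}^n` onto the face.
-/

open Function Set

section Coordinates

variable {ι κ : Type*}

theorem isExposed_inter_support_subset [Finite ι] {A : Set (ι → ℝ)} (hA : ∀ y ∈ A, 0 ≤ y)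
    (S : Set ι) : IsExposed ℝ A (A ∩ {y | ∀ i ∉ S, y i = 0}) := by
  classical
  have := Fintype.ofFinite ι
  rintro ⟨x, hxA, hx⟩
  set l : StrongDual ℝ (ι → ℝ) := -∑ i ∈ Sᶜ.toFinset, ContinuousLinearMap.proj i
  have hl : ∀ y, l y = -∑ i ∈ Sᶜ.toFinset, y i := fun y => by simp [l]
  have hl_eq_zero : ∀ y ∈ A, l y = 0 ↔ ∀ i ∉ S, y i = 0 := fun y hy => by
    simp [hl, Finset.sum_eq_zero_iff_of_nonneg fun i _ => hA y hy i]
  have hl_nonpos : ∀ y ∈ A, l y ≤ 0 := fun y hy => by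
    simpa [hl] using Finset.sum_nonneg fun i _ => hA y hy i
  refine ⟨l, Set.ext fun y => ⟨fun ⟨hyA, hy⟩ => ⟨hyA, fun z hz => ?_⟩, fun ⟨hyA, hmax⟩ => ?_⟩⟩
  · exact ((hl_eq_zero y hyA).2 hy).symm ▸ hl_nonpos z hz
  · exact ⟨hyA, (hl_eq_zero y hyA).1 <| le_antisymm (hl_nonpos y hyA) <|
      (hl_eq_zero x hxA).2 hx ▸ hmax x hxA⟩

theorem convexHull_univ_pi_zero_one [Finite κ] :
    convexHull ℝ (univ.pi fun _ : κ => ({0, 1} : Set ℝ)) = Icc 0 1 := by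
  rw [convexHull_pi, ← pi_univ_Icc]
  simp only [convexHull_pair, segment_eq_Icc zero_le_one, Pi.zero_apply, Pi.one_apply]

theorem extend_comp_eq_self_s14 {e : κ → ι} {y : ι → ℝ} (hy : ∀ i ∉ range e, y i = 0) :
    extend e (y ∘ e) 0 = y := by
  classical
  funext i
  by_cases hi : ∃ k, e k = i
  · rw [extend_def, dif_pos hi, comp_apply, hi.choose_spec]
  · rw [extend_apply' _ _ _ hi, hy i hi, Pi.zero_apply]

theorem convexHull_inter_support_subset_eq_image_Icc [Finite κ] (e : κ → ι) {A : Set (ι → ℝ)}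
    (hA : A ⊆ Icc 0 1)
    (hbinary : ∀ y : ι → ℝ, (∀ i, y i = 0 ∨ y i = 1) → (∀ i ∉ range e, y i = 0) → y ∈ A) :
    convexHull ℝ A ∩ {y | ∀ i ∉ range e, y i = 0} = ExtendByZero.linearMap ℝ e '' Icc 0 1 := by
  classical
  have hext_supp : ∀ c : κ → ℝ, ∀ i ∉ range e, extend e c 0 i = 0 := fun c i hi =>
    extend_apply' _ _ _ hi
  apply Subset.antisymm
  · rintro y ⟨hyA, hy⟩
    have hy01 := convexHull_min hA (convex_Icc 0 1) hyA
    exact ⟨y ∘ e, ⟨fun k => hy01.1 (e k), fun k => hy01.2 (e k)⟩, extend_comp_eq_self_s14 hy⟩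
  · rintro _ ⟨c, hc, rfl⟩
    refine ⟨?_, hext_supp c⟩
    have hvert : ExtendByZero.linearMap ℝ e '' univ.pi (fun _ => {0, 1}) ⊆ A := by
      rintro _ ⟨c, hc, rfl⟩
      refine hbinary _ (fun i => ?_) (hext_supp c)
      rw [ExtendByZero.linearMap_apply, extend_def]
      split_ifs
      exacts [hc _ (mem_univ _), .inl rfl]
    rw [← convexHull_univ_pi_zero_one] at hc
    exact convexHull_mono hvert
      ((ExtendByZero.linearMap ℝ e).image_convexHull _ ▸ mem_image_of_mem _ hc)

end Coordinates

instance (m : ℕ) : Finite (PairIdx m) := inferInstanceAs (Finite {q : Fin m × Fin m // q.1 < q.2})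

theorem LOP_subset_Icc (m : ℕ) : LOP m ⊆ Icc 0 1 := fun y hy =>
  forall_and.1 fun q => by rcases hy.1 q with h | h <;> simp [h]

theorem mem_LOP_of_support_subset_Jlop {n : ℕ} {y : PairIdx (2 * n) → ℝ}
    (h01 : ∀ q, y q = 0 ∨ y q = 1) (hsupp : ∀ q ∉ Jlop n, y q = 0) : y ∈ LOP (2 * n) := by
  refine ⟨h01, fun i j k hij hjk => ?_⟩
  have hij' : (i : ℕ) < j := hij
  have hjk' : (j : ℕ) < k := hjk
  have hik : y ⟨(i, k), hij.trans hjk⟩ = 0 := hsupp _ fun ⟨a, _, hi, hk⟩ => by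
    simp only at hi hk; omega
  have hnot_both : ¬ (⟨(i, j), hij⟩ ∈ Jlop n ∧ ⟨(j, k), hjk⟩ ∈ Jlop n) := by
    rintro ⟨⟨a, -, -, hj⟩, ⟨b, -, hj', -⟩⟩
    simp only at hj hj'; omega
  have hJ : ∀ q, y q = 1 → q ∈ Jlop n := fun q h =>
    by_contra fun hq => by simp [hsupp q hq] at h
  rcases h01 ⟨(i, j), hij⟩ with h1 | h1 <;> rcases h01 ⟨(j, k), hjk⟩ with h2 | h2
  case inr.inr => exact absurd ⟨hJ _ h1, hJ _ h2⟩ hnot_both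
  all_goals rw [h1, h2, hik]; norm_num

theorem LOP_sep_support_subset_Jlop (n : ℕ) :
    {y ∈ LOP (2 * n) | ∀ q ∉ Jlop n, y q = 0} =
      {y | (∀ q ∉ Jlop n, y q = 0) ∧ ∀ q ∈ Jlop n, y q = 0 ∨ y q = 1} := by
  ext y
  refine ⟨fun ⟨hy, hsupp⟩ => ⟨hsupp, fun q _ => hy.1 q⟩, fun ⟨hsupp, hJ⟩ => ⟨?_, hsupp⟩⟩
  refine mem_LOP_of_support_subset_Jlop (fun q => ?_) hsupp
  by_cases hq : q ∈ Jlop n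
  exacts [hJ q hq, .inl (hsupp q hq)]

def jlopPair (n : ℕ) (i : Fin n) : PairIdx (2 * n) :=
  ⟨(⟨2 * i, by omega⟩, ⟨2 * i + 1, by omega⟩), Fin.mk_lt_mk.2 (Nat.lt_succ_self _)⟩

theorem range_jlopPair (n : ℕ) : range (jlopPair n) = Jlop n := by
  ext q
  refine ⟨fun ⟨i, hi⟩ => hi ▸ ⟨i, i.2, rfl, rfl⟩, fun ⟨i, hi, h1, h2⟩ => ⟨⟨i, hi⟩, ?_⟩⟩
  exact Subtype.ext (Prod.ext (Fin.ext h1.symm) (Fin.ext h2.symm))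

theorem jlopPair_injective (n : ℕ) : Injective (jlopPair n) := fun i i' h => by
  have := congrArg (fun q : PairIdx (2 * n) => (q.val.1 : ℕ)) h
  simp only [jlopPair] at this
  omega

theorem stmt14_general (n : ℕ) :
    ({y ∈ LOP (2 * n) | ∀ q ∉ Jlop n, y q = 0} =
      {y | (∀ q ∉ Jlop n, y q = 0) ∧ ∀ q ∈ Jlop n, y q = 0 ∨ y q = 1}) ∧
    IsExposed ℝ (convexHull ℝ (LOP (2 * n)))
      (convexHull ℝ (LOP (2 * n)) ∩ {y | ∀ q ∉ Jlop n, y q = 0}) ∧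
    ∃ φ : (Fin n → ℝ) →ᵃ[ℝ] (PairIdx (2 * n) → ℝ),
      Function.Injective φ ∧
      φ '' {c | ∀ i, 0 ≤ c i ∧ c i ≤ 1} =
        convexHull ℝ (LOP (2 * n)) ∩ {y | ∀ q ∉ Jlop n, y q = 0} := by
  have hcube : {c : Fin n → ℝ | ∀ i, 0 ≤ c i ∧ c i ≤ 1} = Icc 0 1 := by
    ext c; simp [Pi.le_def, forall_and]
  refine ⟨LOP_sep_support_subset_Jlop n, ?_, (ExtendByZero.linearMap ℝ (jlopPair n)).toAffineMap,
    extend_injective (jlopPair_injective n) 0, ?_⟩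
  · exact isExposed_inter_support_subset
      (fun y hy => (convexHull_min (LOP_subset_Icc _) (convex_Icc 0 1) hy).1) _
  · rw [hcube, LinearMap.coe_toAffineMap, ← range_jlopPair]
    refine (convexHull_inter_support_subset_eq_image_Icc _ (LOP_subset_Icc _) ?_).symm
    rw [range_jlopPair]
    exact fun _ => mem_LOP_of_support_subset_Jlop

/-- The vertices of `LOP_{2n}` vanishing outside `J` are exactly the 0/1 vectors
supported on `J` with arbitrary 0/1 values on `J`; consequently
`F = conv(LOP_{2n}) ∩ {y : y_q = 0 ∀ q ∉ J}` is an exposed face of `conv(LOP_{2n})`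
affinely equivalent to the cube `[0,1]^n`. -/
theorem stmt14 (n : ℕ) (hn : 1 ≤ n) :
    ({y ∈ LOP (2 * n) | ∀ q ∉ Jlop n, y q = 0} =
      {y | (∀ q ∉ Jlop n, y q = 0) ∧ ∀ q ∈ Jlop n, y q = 0 ∨ y q = 1}) ∧
    IsExposed ℝ (convexHull ℝ (LOP (2 * n)))
      (convexHull ℝ (LOP (2 * n)) ∩ {y | ∀ q ∉ Jlop n, y q = 0}) ∧
    ∃ φ : (Fin n → ℝ) →ᵃ[ℝ] (PairIdx (2 * n) → ℝ),
      Function.Injective φ ∧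
      φ '' {c | ∀ i, 0 ≤ c i ∧ c i ≤ 1} =
        convexHull ℝ (LOP (2 * n)) ∩ {y | ∀ q ∉ Jlop n, y q = 0} :=
  stmt14_general n
end
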